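/- arXiv:2106.06486 — 4 statements merged into one kernel-verified Lean document; each statement's English description precedes it below -/
import Mathlib

section
/- Suppose T satisfies the Functional Correlation Bound with rate n^{−γ} for η-Hölder observables, for some γ > 0. Then there exists a constant C > 0, depending only on the constant in the Functional Correlation Bound, with the following property. Let k ≥ 1 and let ℓ_0 ≤ u_0 < ℓ_1 ≤ u_1 < ⋯ < ℓ_{k−1} ≤ u_{k−1} be nonnegative integers (so the blocks {ℓ_i,…,u_i} are disjoint and ℓ_{i+1} > u_i). For 0 ≤ i < k let Φ_i : M^{u_i−ℓ_i+1} → ℝ be bounded separately η-Hölder, define the random variable X_i on (M,μ) by X_i(x) = Φ_i(T^{ℓ_i}x,…,T^{u_i}x), and let X̂_0,…,X̂_{k−1} be independent random variables on some probability space with X̂_i equal in distribution to X_i. Set R = max_i ‖Φ_i‖_∞. Then for every Lipschitz function F : [−R,R]^k → ℝ (with respect to the ℓ¹ norm on ℝ^k), |E_μ[F(X_0,…,X_{k−1})] − E[F(X̂_0,…,X̂_{k−1})]| ≤ C Σ_{r=0}^{k−2} (ℓ_{r+1} − u_r)^{−γ} (‖F‖_∞ + Lip(F) Σ_{i=0}^{k−1}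 Σ_{j=0}^{u_i−ℓ_i} [Φ_i]_{η,j}). -/
/-!
Induction on the number `k` of blocks. Integrating out the last block turns `F` into
`F' y = ∫ F (y, X_k x) dμ(x)`, which is bounded by the same `Fsup` and `ℓ¹`-Lipschitz with the
same constant. Writing `F (X_0, …, X_k)` as one separately Hölder observable of the orbit
coordinates `T^{ℓ_i + j} x`, the Functional Correlation Bound splits it at the gap
`(u_{k-1}, ℓ_k)` into `F' (X_0, …, X_{k-1})`, at the cost of one term `(ℓ_k - u_{k-1})^{-γ}`.
The induction hypothesis for `F'` and Fubini for the product of the laws of the `X_i` (which is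
the joint law of the independent copies) close the induction. A function on the cube
`[-R, R]^k` is first extended to all of `ℝ^k` by clamping the coordinates.
-/

open MeasureTheory Function

/-- `T` satisfies the Functional Correlation Bound with rate `n ^ (-γ)` for `η`-Hölder
observables: there is a constant `C₀ > 0` such that for all `0 ≤ p < q`, all monotone sequences
of times `n_0 ≤ ⋯ ≤ n_{q-1}`, and every bounded separately `η`-Hölder `G : M^q → ℝ`
(with bound `Ginf` on `|G|` and separate Hölder constants `Gh i`), the correlation between
`G(T^{n_0}x, …, T^{n_{q-1}}x)` and the decoupled version (where the first `p` coordinates use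
`x₀` and the remaining ones `x₁`) is at most
`C₀ (n_p - n_{p-1})^{-γ} (Ginf + ∑ i, Gh i)`. -/
def FunctionalCorrelationBound {M : Type*} [MetricSpace M] [MeasurableSpace M]
    (μ : Measure M) (T : M → M) (η γ : ℝ) : Prop :=
  ∃ C₀ : ℝ, 0 < C₀ ∧
    ∀ (q p : ℕ), p < q →
    ∀ n : ℕ → ℕ, Monotone n → n (p - 1) < n p →
    ∀ G : (Fin q → M) → ℝ, Measurable G →
    ∀ Ginf : ℝ, 0 ≤ Ginf → (∀ x, |G x| ≤ Ginf) →
    ∀ Gh : Fin q → ℝ, (∀ i, 0 ≤ Gh i) →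
    (∀ (i : Fin q) (x : Fin q → M) (y : M),
        |G x - G (Function.update x i y)| ≤ Gh i * dist (x i) y ^ η) →
    |(∫ x, G (fun i => T^[n i] x) ∂μ) -
        ∫ x₀, ∫ x₁, G (fun i => if (i : ℕ) < p then T^[n i] x₀ else T^[n i] x₁) ∂μ ∂μ|
      ≤ C₀ * ((n p : ℝ) - (n (p - 1) : ℝ)) ^ (-γ) * (Ginf + ∑ i, Gh i)

open ProbabilityTheory

def SeparatelyHolderWith {ι M : Type*} [DecidableEq ι] [PseudoMetricSpace M] (η : ℝ)
    (C : ι → ℝ) (G : (ι → M) → ℝ) : Prop :=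
  ∀ i x y, |G x - G (update x i y)| ≤ C i * dist (x i) y ^ η

def FunctionalCorrelationBoundWith {M : Type*} [MetricSpace M] [MeasurableSpace M]
    (μ : Measure M) (T : M → M) (η γ C₀ : ℝ) : Prop :=
  ∀ (q p : ℕ), p < q →
    ∀ n : ℕ → ℕ, Monotone n → n (p - 1) < n p →
    ∀ G : (Fin q → M) → ℝ, Measurable G →
    ∀ Ginf : ℝ, 0 ≤ Ginf → (∀ x, |G x| ≤ Ginf) →
    ∀ Gh : Fin q → ℝ, (∀ i, 0 ≤ Gh i) → SeparatelyHolderWith η Gh G →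
    |(∫ x, G (fun i => T^[n i] x) ∂μ) -
        ∫ x₀, ∫ x₁, G (fun i => if (i : ℕ) < p then T^[n i] x₀ else T^[n i] x₁) ∂μ ∂μ|
      ≤ C₀ * ((n p : ℝ) - (n (p - 1) : ℝ)) ^ (-γ) * (Ginf + ∑ i, Gh i)

theorem functionalCorrelationBound_iff {M : Type*} [MetricSpace M] [MeasurableSpace M]
    {μ : Measure M} {T : M → M} {η γ : ℝ} :
    FunctionalCorrelationBound μ T η γ ↔
      ∃ C₀, 0 < C₀ ∧ FunctionalCorrelationBoundWith μ T η γ C₀ :=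
  Iff.rfl

namespace SeparatelyHolderWith

variable {ι κ M : Type*} [DecidableEq ι] [PseudoMetricSpace M] {η : ℝ}

theorem comp_injective [Fintype κ] [DecidableEq κ] {C : κ → ℝ} {G : (κ → M) → ℝ}
    (hG : SeparatelyHolderWith η C G) {σ : κ → ι} (hσ : Injective σ) :
    SeparatelyHolderWith η (fun m => ∑ j, if σ j = m then C j else 0) (fun z => G (z ∘ σ)) := by
  intro m z y
  by_cases hm : ∃ j, σ j = m
  · obtain ⟨j, rfl⟩ := hm
    simp only [hσ.eq_iff, Finset.sum_ite_eq', Finset.mem_univ, if_true]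
    rw [update_comp_eq_of_injective z hσ]
    exact hG j (z ∘ σ) y
  · simp only [not_exists] at hm
    simp [hm, update_comp_eq_of_forall_ne z y hm]

theorem lipschitz_comp [Fintype κ] {F : (κ → ℝ) → ℝ} {L : ℝ} (hL : 0 ≤ L)
    (hF : ∀ y y', |F y - F y'| ≤ L * ∑ i, |y i - y' i|) {G : κ → (ι → M) → ℝ}
    {C : κ → ι → ℝ} (hG : ∀ i, SeparatelyHolderWith η (C i) (G i)) :
    SeparatelyHolderWith η (fun m => L * ∑ i, C i m) (fun z => F (fun i => G i z)) := by
  intro m z y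
  calc |F (fun i => G i z) - F (fun i => G i (update z m y))|
      ≤ L * ∑ i, |G i z - G i (update z m y)| := hF _ _
    _ ≤ L * ∑ i, C i m * dist (z m) y ^ η := by gcongr with i; exact hG i m z y
    _ = L * (∑ i, C i m) * dist (z m) y ^ η := by rw [← Finset.sum_mul, mul_assoc]

theorem lipschitz_comp_blocks [Fintype ι] {I : Type*} [Fintype I] {J : I → Type*}
    [∀ i, Fintype (J i)] [∀ i, DecidableEq (J i)] {F : (I → ℝ) → ℝ} {L : ℝ} (hL : 0 ≤ L)
    (hF : ∀ y y', |F y - F y'| ≤ L * ∑ i, |y i - y' i|) {Φ : (i : I) → (J i → M) → ℝ}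
    {C : (i : I) → J i → ℝ} (hC : ∀ i j, 0 ≤ C i j) (hΦ : ∀ i, SeparatelyHolderWith η (C i) (Φ i))
    {σ : (i : I) → J i → ι} (hσ : ∀ i, Injective (σ i)) :
    ∃ Gh : ι → ℝ, (∀ m, 0 ≤ Gh m) ∧ ∑ m, Gh m = L * ∑ i, ∑ j, C i j ∧
      SeparatelyHolderWith η Gh (fun z => F (fun i => Φ i (z ∘ σ i))) := by
  refine ⟨_, fun m => ?_, ?_, lipschitz_comp hL hF fun i => (hΦ i).comp_injective (hσ i)⟩
  · exact mul_nonneg hL (Finset.sum_nonneg fun i _ => Finset.sum_nonneg fun j _ => by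
      split_ifs; exacts [hC i j, le_rfl])
  · rw [← Finset.mul_sum, Finset.sum_comm]
    congr 1
    refine Finset.sum_congr rfl fun i _ => ?_
    rw [Finset.sum_comm]
    simp

end SeparatelyHolderWith

theorem continuous_of_abs_sub_le_mul_sum {ι : Type*} [Fintype ι] {F : (ι → ℝ) → ℝ} {L : ℝ}
    (hF : ∀ y y', |F y - F y'| ≤ L * ∑ i, |y i - y' i|) : Continuous F := by
  refine (LipschitzWith.of_dist_le_mul (K := ⟨max L 0 * Fintype.card ι, by positivity⟩)
    fun y y' => ?_).continuous
  calc dist (F y) (F y') ≤ L * ∑ i, |y i - y' i| := hF y y'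
    _ ≤ max L 0 * ∑ _i : ι, dist y y' := by
        gcongr with i
        · exact le_max_left _ _
        · exact dist_le_pi_dist y y' i
    _ = max L 0 * Fintype.card ι * dist y y' := by simp [mul_assoc]

theorem abs_integral_le_of_forall_abs_le {α : Type*} [MeasurableSpace α] {μ : Measure α}
    [IsProbabilityMeasure μ] {f : α → ℝ} {C : ℝ} (hf : ∀ x, |f x| ≤ C) : |∫ x, f x ∂μ| ≤ C := by
  simpa using norm_integral_le_of_norm_le_const (μ := μ)
    (.of_forall fun x => (Real.norm_eq_abs _).trans_le (hf x))

theorem abs_integral_snoc_sub_integral_snoc_le {α : Type*} [MeasurableSpace α] {μ : Measure α}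
    [IsProbabilityMeasure μ] {k : ℕ} {F : (Fin (k + 1) → ℝ) → ℝ} {Fsup L : ℝ}
    (hFb : ∀ y, |F y| ≤ Fsup) (hFl : ∀ y y', |F y - F y'| ≤ L * ∑ i, |y i - y' i|)
    {X : α → ℝ} (hX : AEMeasurable X μ) (y y' : Fin k → ℝ) :
    |∫ x, F (Fin.snoc y (X x)) ∂μ - ∫ x, F (Fin.snoc y' (X x)) ∂μ| ≤ L * ∑ i, |y i - y' i| := by
  have hint : ∀ y, Integrable (fun x => F (Fin.snoc y (X x))) μ := fun y =>
    .of_bound (((continuous_of_abs_sub_le_mul_sum hFl).comp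
      (continuous_const.finSnoc continuous_id)).measurable.comp_aemeasurable
        hX).aestronglyMeasurable Fsup (.of_forall fun x => hFb _)
  rw [← integral_sub (hint y) (hint y')]
  refine abs_integral_le_of_forall_abs_le fun x => (hFl _ _).trans_eq ?_
  simp [Fin.sum_univ_castSucc]

theorem integral_pi_eq_integral_integral_snoc {α E : Type*} [MeasurableSpace α]
    [NormedAddCommGroup E] [NormedSpace ℝ E] {k : ℕ} (ν : Fin (k + 1) → Measure α)
    [∀ i, SigmaFinite (ν i)] {F : (Fin (k + 1) → α) → E} (hF : Integrable F (Measure.pi ν)) :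
    ∫ y, F y ∂Measure.pi ν =
      ∫ y, ∫ b, F (Fin.snoc y b) ∂ν (Fin.last k) ∂Measure.pi (fun i => ν i.castSucc) := by
  set e := MeasurableEquiv.piFinSuccAbove (fun _ => α) (Fin.last k)
  have he := (measurePreserving_piFinSuccAbove ν (Fin.last k)).symm
  rw [← he.integral_comp', integral_prod_symm (fun z => F (e.symm z)) ((he.integrable_comp_emb
    e.symm.measurableEmbedding).mpr hF)]
  simp [e, MeasurableEquiv.piFinSuccAbove_symm_apply, Fin.insertNthEquiv, Fin.insertNth_last']

theorem integral_pi_fin_one {α E : Type*} [MeasurableSpace α]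
    [NormedAddCommGroup E] [NormedSpace ℝ E] (ν : Fin 1 → Measure α) (F : (Fin 1 → α) → E) :
    ∫ y, F y ∂Measure.pi ν = ∫ b, F (fun _ => b) ∂ν 0 :=
  ((measurePreserving_piUnique ν).symm.integral_comp' F).symm

def blockObservable {M : Type*} {s : ℕ → ℕ} (T : M → M) (ℓ : ℕ → ℕ)
    (Φ : (i : ℕ) → (Fin (s i) → M) → ℝ) (i : ℕ) (x : M) : ℝ :=
  Φ i (fun j => T^[ℓ i + j] x)

theorem measurable_blockObservable {M : Type*} [MeasurableSpace M] {s : ℕ → ℕ} {T : M → M}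
    (hT : Measurable T) (ℓ : ℕ → ℕ) {Φ : (i : ℕ) → (Fin (s i) → M) → ℝ}
    (hΦ : ∀ i, Measurable (Φ i)) (i : ℕ) : Measurable (blockObservable T ℓ Φ i) :=
  (hΦ i).comp (measurable_pi_lambda _ fun _ => hT.iterate _)

theorem blockEnd_le_blockEnd {K : ℕ} {ℓ u : ℕ → ℕ} (hℓu : ∀ i, i < K → ℓ i ≤ u i)
    (hu : ∀ i, i + 1 < K → u i < ℓ (i + 1)) {i i' : ℕ} (h : i ≤ i') (hi' : i' < K) :
    u i ≤ u i' := by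
  induction i', h using Nat.le_induction with
  | base => rfl
  | succ i' _ ih =>
    have := hu i' hi'
    have := hℓu (i' + 1) hi'
    have := ih (by omega)
    omega

theorem block_position {k : ℕ} {ℓ u : ℕ → ℕ} (hℓu : ∀ i, i < k + 1 → ℓ i ≤ u i)
    (hu : ∀ i, i + 1 < k + 1 → u i < ℓ (i + 1)) {i j : ℕ} (hi : i < k + 1)
    (hj : j < u i - ℓ i + 1) :
    (i < k ∧ ℓ i + j ≤ u (k - 1)) ∨ (i = k ∧ ℓ k ≤ ℓ i + j ∧ ℓ i + j ≤ u k) := by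
  have := hℓu i hi
  obtain hik | rfl := Nat.lt_succ_iff_lt_or_eq.1 hi
  · have := blockEnd_le_blockEnd hℓu hu (Nat.le_sub_one_of_lt hik) (by omega)
    omega
  · omega

section Decoupling

variable {M : Type*} [MetricSpace M] [MeasurableSpace M] {μ : Measure M} {T : M → M}
  {η γ C₀ : ℝ}

theorem FunctionalCorrelationBoundWith.abs_integral_sub_integral_snoc_le
    (hFCB : FunctionalCorrelationBoundWith μ T η γ C₀) {k : ℕ} (hk : 1 ≤ k) {ℓ u : ℕ → ℕ}
    (hℓu : ∀ i, i < k + 1 → ℓ i ≤ u i) (hu : ∀ i, i + 1 < k + 1 → u i < ℓ (i + 1))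
    {Φ : (i : ℕ) → (Fin (u i - ℓ i + 1) → M) → ℝ} (hΦ : ∀ i, Measurable (Φ i))
    {Φh : (i : ℕ) → Fin (u i - ℓ i + 1) → ℝ} (hΦh0 : ∀ i j, 0 ≤ Φh i j)
    (hΦhol : ∀ i, SeparatelyHolderWith η (Φh i) (Φ i))
    {F : (Fin (k + 1) → ℝ) → ℝ} {Fsup FLip : ℝ} (hFsup : 0 ≤ Fsup) (hFLip : 0 ≤ FLip)
    (hFb : ∀ y, |F y| ≤ Fsup) (hFl : ∀ y y', |F y - F y'| ≤ FLip * ∑ i, |y i - y' i|) :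
    |∫ x, F (fun i => blockObservable T ℓ Φ i x) ∂μ -
        ∫ x₀, ∫ x₁, F (Fin.snoc (fun i : Fin k => blockObservable T ℓ Φ i x₀)
          (blockObservable T ℓ Φ k x₁)) ∂μ ∂μ|
      ≤ C₀ * ((ℓ k : ℝ) - (u (k - 1) : ℝ)) ^ (-γ) *
        (Fsup + FLip * ∑ i ∈ Finset.range (k + 1), ∑ j, Φh i j) := by
  have hgap : u (k - 1) < ℓ k := by simpa [Nat.sub_add_cancel hk] using hu (k - 1) (by omega)
  have hlast := hℓu k (by omega)
  have hblock : ∀ (i : Fin (k + 1)) (j : Fin (u i - ℓ i + 1)),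
      ((i : ℕ) < k ∧ ℓ i + j ≤ u (k - 1)) ∨ ((i : ℕ) = k ∧ ℓ k ≤ ℓ i + j ∧ ℓ i + j ≤ u k) :=
    fun i j => block_position hℓu hu i.2 j.2
  have hidx : ∀ (i : Fin (k + 1)) (j : Fin (u i - ℓ i + 1)), ℓ i + j < u k + 1 := by
    intro i j
    rcases hblock i j with h | h <;> omega
  let σ : (i : Fin (k + 1)) → Fin (u i - ℓ i + 1) → Fin (u k + 1) :=
    fun i j => ⟨ℓ i + j, hidx i j⟩
  have hσ : ∀ i, Injective (σ i) := fun i j j' h => Fin.ext (by simpa [σ] using h)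
  obtain ⟨Gh, hGh0, hGhsum, hGhol⟩ :=
    SeparatelyHolderWith.lipschitz_comp_blocks hFLip hFl (fun i => hΦh0 i) (fun i => hΦhol i) hσ
  -- `n` fixes every coordinate read by a block and sends the idle ones between the last two
  -- blocks to `u (k - 1)`, so that the gap of `n` at `p = ℓ k` is exactly `ℓ k - u (k - 1)`.
  let n : ℕ → ℕ := fun m => if m < ℓ k then min m (u (k - 1)) else m
  have hn : Monotone n := by
    intro a b hab
    simp only [n]
    split_ifs <;> omega
  have hn_block : ∀ (i : Fin (k + 1)) (j : Fin (u i - ℓ i + 1)), n (ℓ i + j) = ℓ i + j := by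
    intro i j
    simp only [n]
    rcases hblock i j with h | h <;> split_ifs <;> omega
  have hlt_iff : ∀ (i : Fin (k + 1)) (j : Fin (u i - ℓ i + 1)), ℓ i + j < ℓ k ↔ (i : ℕ) < k := by
    intro i j
    rcases hblock i j with h | h <;> omega
  have hn_gap : n (ℓ k - 1) = u (k - 1) ∧ n (ℓ k) = ℓ k := by
    simp only [n]
    constructor <;> split_ifs <;> omega
  have hsnoc : ∀ x₀ x₁ : M, (fun i : Fin (k + 1) =>
      Φ i (fun j => if (i : ℕ) < k then T^[ℓ i + j] x₀ else T^[ℓ i + j] x₁)) =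
      Fin.snoc (fun i : Fin k => blockObservable T ℓ Φ i x₀) (blockObservable T ℓ Φ k x₁) := by
    intro x₀ x₁
    funext i
    induction i using Fin.lastCases <;> simp [blockObservable]
  have hG : Measurable fun z : Fin (u k + 1) → M => F (fun i => Φ i (z ∘ σ i)) :=
    (continuous_of_abs_sub_le_mul_sum hFl).measurable.comp <| measurable_pi_lambda _ fun i =>
      (hΦ i).comp (measurable_pi_lambda _ fun _ => measurable_pi_apply _)
  have := hFCB (u k + 1) (ℓ k) (by omega) n hn (by rw [hn_gap.1, hn_gap.2]; exact hgap) _ hG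
    Fsup hFsup (fun z => hFb _) Gh hGh0 hGhol
  simpa [σ, Function.comp_def, hn_block, hlt_iff, hsnoc, hn_gap, hGhsum, blockObservable,
    Fin.sum_univ_eq_sum_range (fun i => ∑ j, Φh i j)] using this

end Decoupling

section Induction

variable {M : Type*} [MetricSpace M] [MeasurableSpace M] {μ : Measure M}
  [IsProbabilityMeasure μ] {T : M → M} {η γ C₀ : ℝ}

theorem FunctionalCorrelationBoundWith.abs_integral_sub_integral_pi_le
    (hFCB : FunctionalCorrelationBoundWith μ T η γ C₀) (hC₀ : 0 ≤ C₀) (hT : Measurable T)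
    {k : ℕ} (hk : 1 ≤ k) {ℓ u : ℕ → ℕ}
    (hℓu : ∀ i, i < k → ℓ i ≤ u i) (hu : ∀ i, i + 1 < k → u i < ℓ (i + 1))
    {Φ : (i : ℕ) → (Fin (u i - ℓ i + 1) → M) → ℝ} (hΦ : ∀ i, Measurable (Φ i))
    {Φh : (i : ℕ) → Fin (u i - ℓ i + 1) → ℝ} (hΦh0 : ∀ i j, 0 ≤ Φh i j)
    (hΦhol : ∀ i, SeparatelyHolderWith η (Φh i) (Φ i))
    {F : (Fin k → ℝ) → ℝ} {Fsup FLip : ℝ} (hFsup : 0 ≤ Fsup) (hFLip : 0 ≤ FLip)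
    (hFb : ∀ y, |F y| ≤ Fsup) (hFl : ∀ y y', |F y - F y'| ≤ FLip * ∑ i, |y i - y' i|) :
    |∫ x, F (fun i => blockObservable T ℓ Φ i x) ∂μ -
        ∫ y, F y ∂Measure.pi (fun i : Fin k => μ.map (blockObservable T ℓ Φ i))|
      ≤ C₀ * (∑ r ∈ Finset.range (k - 1), ((ℓ (r + 1) : ℝ) - (u r : ℝ)) ^ (-γ)) *
        (Fsup + FLip * ∑ i ∈ Finset.range k, ∑ j, Φh i j) := by
  have hX := measurable_blockObservable hT ℓ hΦ
  induction k, hk using Nat.le_induction with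
  | base =>
    rw [integral_pi_fin_one, integral_map (f := fun b => F fun _ => b) (hX _).aemeasurable
      ((continuous_of_abs_sub_le_mul_sum hFl).comp
        (continuous_pi fun _ => continuous_id)).aestronglyMeasurable]
    simp [Fin.val_eq_zero]
  | succ k hk ih =>
    set X := blockObservable T ℓ Φ
    have hFc := continuous_of_abs_sub_le_mul_sum hFl
    set F' : (Fin k → ℝ) → ℝ := fun y => ∫ x, F (Fin.snoc y (X k x)) ∂μ
    have hF'b : ∀ y, |F' y| ≤ Fsup := fun y => abs_integral_le_of_forall_abs_le fun x => hFb _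
    have hF'l : ∀ y y', |F' y - F' y'| ≤ FLip * ∑ i, |y i - y' i| :=
      abs_integral_snoc_sub_integral_snoc_le hFb hFl (hX k).aemeasurable
    have hpi : ∫ y, F y ∂Measure.pi (fun i : Fin (k + 1) => μ.map (X i)) =
        ∫ y, F' y ∂Measure.pi (fun i : Fin k => μ.map (X i)) := by
      rw [integral_pi_eq_integral_integral_snoc _
        (.of_bound hFc.aestronglyMeasurable Fsup (.of_forall hFb))]
      simp only [Fin.val_last, Fin.val_castSucc]
      refine integral_congr_ae (.of_forall fun y => integral_map (hX k).aemeasurable ?_)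
      exact (hFc.comp (continuous_const.finSnoc continuous_id)).aestronglyMeasurable
    have hdec := hFCB.abs_integral_sub_integral_snoc_le hk hℓu hu hΦ hΦh0 hΦhol hFsup hFLip hFb hFl
    have hIH := ih (fun i hi => hℓu i (by omega)) (fun i hi => hu i (by omega)) hF'b hF'l
    have hS : 0 ≤ ∑ r ∈ Finset.range (k - 1), ((ℓ (r + 1) : ℝ) - (u r : ℝ)) ^ (-γ) :=
      Finset.sum_nonneg fun r hr => Real.rpow_nonneg (sub_nonneg.2 (by
        have := hu r (by have := Finset.mem_range.1 hr; omega); exact_mod_cast this.le)) _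
    have hB : ∑ i ∈ Finset.range k, ∑ j, Φh i j ≤ ∑ i ∈ Finset.range (k + 1), ∑ j, Φh i j :=
      Finset.sum_le_sum_of_subset_of_nonneg (by simp)
        fun i _ _ => Finset.sum_nonneg fun j _ => hΦh0 i j
    have hsplit : ∑ r ∈ Finset.range (k + 1 - 1), ((ℓ (r + 1) : ℝ) - (u r : ℝ)) ^ (-γ) =
        ∑ r ∈ Finset.range (k - 1), ((ℓ (r + 1) : ℝ) - (u r : ℝ)) ^ (-γ) +
          ((ℓ k : ℝ) - (u (k - 1) : ℝ)) ^ (-γ) := by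
      rw [Nat.add_sub_cancel, ← Nat.sub_add_cancel hk, Finset.sum_range_succ, Nat.sub_add_cancel hk]
    calc _ = |(∫ x, F (fun i => X i x) ∂μ - ∫ x, F' (fun i => X i x) ∂μ) +
          (∫ x, F' (fun i => X i x) ∂μ -
            ∫ y, F' y ∂Measure.pi (fun i : Fin k => μ.map (X i)))| := by
          rw [hpi, sub_add_sub_cancel]
      _ ≤ _ := (abs_add_le _ _).trans (add_le_add hdec hIH)
      _ ≤ _ := by
        have := mul_le_mul_of_nonneg_left
          (add_le_add_right (mul_le_mul_of_nonneg_left hB hFLip) Fsup) (mul_nonneg hC₀ hS)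
        rw [hsplit]
        linarith

end Induction

theorem exists_extension_from_cube {ι : Type*} [Fintype ι] {F : (ι → ℝ) → ℝ} {R Fsup L : ℝ}
    (hR : 0 ≤ R) (hL : 0 ≤ L) (hFb : ∀ y, (∀ i, |y i| ≤ R) → |F y| ≤ Fsup)
    (hFl : ∀ y y', (∀ i, |y i| ≤ R) → (∀ i, |y' i| ≤ R) → |F y - F y'| ≤ L * ∑ i, |y i - y' i|) :
    ∃ G : (ι → ℝ) → ℝ, (∀ y, (∀ i, |y i| ≤ R) → G y = F y) ∧ (∀ y, |G y| ≤ Fsup) ∧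
      ∀ y y', |G y - G y'| ≤ L * ∑ i, |y i - y' i| := by
  have hRR : -R ≤ R := by linarith
  let clamp : ℝ → ℝ := fun t => Set.projIcc (-R) R hRR t
  have hclamp : ∀ t, |clamp t| ≤ R := fun t => abs_le.2 (Set.projIcc (-R) R hRR t).2
  refine ⟨fun y => F (fun i => clamp (y i)), fun y hy => ?_, fun y => hFb _ fun i => hclamp _,
    fun y y' => (hFl _ _ (fun i => hclamp _) fun i => hclamp _).trans ?_⟩
  · exact congrArg F (funext fun i => by simp [clamp, Set.projIcc_of_mem hRR (abs_le.1 (hy i))])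
  · exact mul_le_mul_of_nonneg_left
      (Finset.sum_le_sum fun i _ => Set.abs_projIcc_sub_projIcc hRR) hL

theorem integral_comp_eq_integral_pi_of_iIndepFun {Ω α ι : Type*} [Fintype ι]
    [MeasurableSpace Ω] [MeasurableSpace α] {P : Measure Ω} [IsProbabilityMeasure P]
    {μ : Measure α} {Y : ι → Ω → ℝ} (hY : iIndepFun Y P) {X : ι → α → ℝ}
    (hYX : ∀ i, IdentDistrib (Y i) (X i) P μ) {G : (ι → ℝ) → ℝ} (hG : Measurable G) :
    ∫ ω, G (fun i => Y i ω) ∂P = ∫ y, G y ∂Measure.pi (fun i => μ.map (X i)) := by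
  have hYm := fun i => (hYX i).aemeasurable_fst
  rw [← integral_map (aemeasurable_pi_lambda _ hYm) hG.aestronglyMeasurable,
    hY.map_fun_eq_pi_map hYm]
  simp_rw [(hYX _).map_eq]

theorem stmt2_general {M : Type*} [MetricSpace M] [MeasurableSpace M]
    (μ : Measure M) [IsProbabilityMeasure μ] (T : M → M) (hT : MeasurePreserving T μ μ)
    (η : ℝ) (γ : ℝ)
    (hFCB : FunctionalCorrelationBound μ T η γ) :
    ∃ C : ℝ, 0 < C ∧
      ∀ (k : ℕ), 1 ≤ k →
      ∀ (ℓ u : ℕ → ℕ),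
        (∀ i, i < k → ℓ i ≤ u i) →
        (∀ i, i + 1 < k → u i < ℓ (i + 1)) →
      ∀ (Φ : (i : ℕ) → (Fin (u i - ℓ i + 1) → M) → ℝ),
        (∀ i, Measurable (Φ i)) →
      ∀ (R : ℝ), 0 ≤ R →
        (∀ (i : ℕ), i < k → ∀ z : Fin (u i - ℓ i + 1) → M, |Φ i z| ≤ R) →
      ∀ (Φh : (i : ℕ) → Fin (u i - ℓ i + 1) → ℝ),
        (∀ i j, 0 ≤ Φh i j) →
        (∀ (i : ℕ) (j : Fin (u i - ℓ i + 1)) (z : Fin (u i - ℓ i + 1) → M) (y : M),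
          |Φ i z - Φ i (Function.update z j y)| ≤ Φh i j * dist (z j) y ^ η) →
      ∀ (Ω : Type) (_ : MeasurableSpace Ω) (P : Measure Ω), IsProbabilityMeasure P →
      ∀ (Xhat : ℕ → Ω → ℝ),
        ProbabilityTheory.iIndepFun
          (fun i : Fin k => Xhat i) P →
        (∀ i, i < k → ProbabilityTheory.IdentDistrib (Xhat i)
          (fun x => Φ i (fun j => T^[ℓ i + (j : ℕ)] x)) P μ) →
      ∀ (F : (Fin k → ℝ) → ℝ) (Fsup FLip : ℝ), 0 ≤ Fsup → 0 ≤ FLip →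
        (∀ y : Fin k → ℝ, (∀ i, |y i| ≤ R) → |F y| ≤ Fsup) →
        (∀ y y' : Fin k → ℝ, (∀ i, |y i| ≤ R) → (∀ i, |y' i| ≤ R) →
          |F y - F y'| ≤ FLip * ∑ i, |y i - y' i|) →
        |(∫ x, F (fun i => Φ i (fun j => T^[ℓ i + (j : ℕ)] x)) ∂μ) -
            ∫ ω, F (fun i => Xhat i ω) ∂P|
          ≤ C * (∑ r ∈ Finset.range (k - 1), ((ℓ (r + 1) : ℝ) - (u r : ℝ)) ^ (-γ)) *
            (Fsup + FLip * ∑ i ∈ Finset.range k, ∑ j, Φh i j) := by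
  obtain ⟨C₀, hC₀, hFCB⟩ := functionalCorrelationBound_iff.1 hFCB
  refine ⟨C₀, hC₀, fun k hk ℓ u hℓu hu Φ hΦ R hR hΦR Φh hΦh0 hΦhol Ω _ P _ Xhat hindep hid
    F Fsup FLip hFsup hFLip hFb hFl => ?_⟩
  obtain ⟨G, hGF, hGb, hGl⟩ := exists_extension_from_cube hR hFLip hFb hFl
  have hXhat : ∀ᵐ ω ∂P, ∀ i : Fin k, |Xhat i ω| ≤ R := ae_all_iff.2 fun i =>
    (hid i i.2).symm.ae_snd (p := fun t => |t| ≤ R)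
      (measurableSet_le measurable_abs measurable_const) (.of_forall fun x => hΦR i i.2 _)
  have hμ : ∫ x, F (fun i => Φ i (fun j => T^[ℓ i + (j : ℕ)] x)) ∂μ =
      ∫ x, G (fun i => blockObservable T ℓ Φ i x) ∂μ :=
    integral_congr_ae (.of_forall fun x => (hGF _ fun i => hΦR i i.2 _).symm)
  have hP : ∫ ω, F (fun i => Xhat i ω) ∂P =
      ∫ y, G y ∂Measure.pi (fun i : Fin k => μ.map (blockObservable T ℓ Φ i)) := by
    rw [← integral_comp_eq_integral_pi_of_iIndepFun (X := fun i : Fin k => blockObservable T ℓ Φ i)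
      hindep (fun i => hid i i.2) (continuous_of_abs_sub_le_mul_sum hGl).measurable]
    exact integral_congr_ae (hXhat.mono fun ω hω => (hGF _ hω).symm)
  rw [hμ, hP]
  exact hFCB.abs_integral_sub_integral_pi_le hC₀.le hT.measurable hk hℓu hu hΦ hΦh0 hΦhol
    hFsup hFLip hGb hGl

/-- **Lemma 4.1 (weak dependence).** Suppose `T` satisfies the Functional Correlation Bound
with rate `n^{-γ}`. Then there is `C > 0`, depending only on the FCB constant, such that for
disjoint blocks `{ℓ_i, …, u_i}` (`ℓ_i ≤ u_i < ℓ_{i+1}`), bounded separately `η`-Hölder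
`Φ_i : M^{u_i-ℓ_i+1} → ℝ` with `|Φ_i| ≤ R`, random variables `X_i(x) = Φ_i(T^{ℓ_i}x,…,T^{u_i}x)`
and independent `X̂_i` with `X̂_i =_d X_i`, and every `F : [-R,R]^k → ℝ` Lipschitz for the
`ℓ¹` norm (with sup bound `Fsup` and Lipschitz constant `FLip` on the cube):
`|E_μ[F(X_0,…,X_{k-1})] - E[F(X̂_0,…,X̂_{k-1})]|
  ≤ C ∑_{r=0}^{k-2} (ℓ_{r+1}-u_r)^{-γ} (Fsup + FLip ∑_i ∑_j [Φ_i]_{η,j})`. -/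
theorem stmt2 {M : Type*} [MetricSpace M] [MeasurableSpace M] [BorelSpace M]
    (μ : Measure M) [IsProbabilityMeasure μ] (T : M → M) (hT : MeasurePreserving T μ μ)
    (η : ℝ) (hη0 : 0 < η) (hη1 : η ≤ 1) (γ : ℝ) (hγ : 0 < γ)
    (hFCB : FunctionalCorrelationBound μ T η γ) :
    ∃ C : ℝ, 0 < C ∧
      ∀ (k : ℕ), 1 ≤ k →
      ∀ (ℓ u : ℕ → ℕ),
        (∀ i, i < k → ℓ i ≤ u i) →
        (∀ i, i + 1 < k → u i < ℓ (i + 1)) →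
      ∀ (Φ : (i : ℕ) → (Fin (u i - ℓ i + 1) → M) → ℝ),
        (∀ i, Measurable (Φ i)) →
      ∀ (R : ℝ), 0 ≤ R →
        (∀ (i : ℕ), i < k → ∀ z : Fin (u i - ℓ i + 1) → M, |Φ i z| ≤ R) →
      ∀ (Φh : (i : ℕ) → Fin (u i - ℓ i + 1) → ℝ),
        (∀ i j, 0 ≤ Φh i j) →
        (∀ (i : ℕ) (j : Fin (u i - ℓ i + 1)) (z : Fin (u i - ℓ i + 1) → M) (y : M),
          |Φ i z - Φ i (Function.update z j y)| ≤ Φh i j * dist (z j) y ^ η) →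
      ∀ (Ω : Type) (_ : MeasurableSpace Ω) (P : Measure Ω), IsProbabilityMeasure P →
      ∀ (Xhat : ℕ → Ω → ℝ),
        ProbabilityTheory.iIndepFun
          (fun i : Fin k => Xhat i) P →
        (∀ i, i < k → ProbabilityTheory.IdentDistrib (Xhat i)
          (fun x => Φ i (fun j => T^[ℓ i + (j : ℕ)] x)) P μ) →
      ∀ (F : (Fin k → ℝ) → ℝ) (Fsup FLip : ℝ), 0 ≤ Fsup → 0 ≤ FLip →
        (∀ y : Fin k → ℝ, (∀ i, |y i| ≤ R) → |F y| ≤ Fsup) →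
        (∀ y y' : Fin k → ℝ, (∀ i, |y i| ≤ R) → (∀ i, |y' i| ≤ R) →
          |F y - F y'| ≤ FLip * ∑ i, |y i - y' i|) →
        |(∫ x, F (fun i => Φ i (fun j => T^[ℓ i + (j : ℕ)] x)) ∂μ) -
            ∫ ω, F (fun i => Xhat i ω) ∂P|
          ≤ C * (∑ r ∈ Finset.range (k - 1), ((ℓ (r + 1) : ℝ) - (u r : ℝ)) ^ (-γ)) *
            (Fsup + FLip * ∑ i ∈ Finset.range k, ∑ j, Φh i j) :=
  stmt2_general μ T hT η γ hFCB
end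

section
/- Let γ > 1 and suppose T satisfies the Functional Correlation Bound with rate n^{−γ} for η-Hölder observables. Then there exists a constant C > 0 such that for all integers k ≥ 1 and n ≥ 2k and all bounded η-Hölder v, w : M → ℝ the following holds. Set a_i = ⌊in/(2k)⌋ for 0 ≤ i ≤ 2k, let X_i = 𝕊_{v,w}(a_{2i}, a_{2i+1}) − E_μ[𝕊_{v,w}(a_{2i}, a_{2i+1})] for 0 ≤ i < k, viewed as (mean zero) random variables on (M,μ), and let X̂_0,…,X̂_{k−1} be independent random variables on some probability space with X̂_i equal in distribution to X_i. Then E_μ[|Σ_{i=0}^{k−1} X_i|^{γ}] ≤ C k n^{γ} ‖v‖_η^{γ} ‖w‖_η^{γ} + E[|Σ_{i=0}^{k−1} X̂_i|^{γ}]. -/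
/-!
Lindeberg's replacement method. Truncating `t ↦ |t| ^ γ` at a level `R ≥ |∑ X_i|` gives a bounded
Lipschitz test function `φ`; put `ψ_j t = E φ (t + X̂_0 + ⋯ + X̂_{j-1})`. Replacing `X_j` by `X̂_j`,
i.e. passing from `∫ ψ_j (X_j + ⋯ + X_{k-1}) dμ` to `∫ ψ_{j+1} (X_{j+1} + ⋯ + X_{k-1}) dμ`, only
requires decoupling the block `j` from the later blocks, which lie at distance `≥ n / 2k` in time.
The Functional Correlation Bound, applied to the separately Hölder observable
`ψ_j (X_j + ⋯ + X_{k-1})` of the trajectory, bounds this error by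
`(n / 2k) ^ (-γ) (R ^ γ + n γ R ^ (γ - 1) (n / 2k) ‖v‖ ‖w‖) ≲ n ^ γ ‖v‖ ^ γ ‖w‖ ^ γ`, since
`R ≲ k (n / 2k) ^ 2 ‖v‖ ‖w‖`. Summing over the `k` steps gives the claim.
-/


open MeasureTheory Function

open ProbabilityTheory Finset
open scoped NNReal

lemma abs_rpow_sub_rpow_le {γ R a b : ℝ} (hγ : 1 ≤ γ) (ha : a ∈ Set.Icc 0 R)
    (hb : b ∈ Set.Icc 0 R) : |a ^ γ - b ^ γ| ≤ γ * R ^ (γ - 1) * |a - b| := by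
  have hderiv : ∀ x ∈ Set.Icc 0 R, ‖γ * x ^ (γ - 1)‖ ≤ γ * R ^ (γ - 1) := fun x hx => by
    rw [Real.norm_eq_abs, abs_of_nonneg (mul_nonneg (by linarith) (Real.rpow_nonneg hx.1 _))]
    exact mul_le_mul_of_nonneg_left (Real.rpow_le_rpow hx.1 hx.2 (by linarith)) (by linarith)
  simpa only [Real.norm_eq_abs] using Convex.norm_image_sub_le_of_norm_hasDerivWithin_le
    (fun x _ => (Real.hasDerivAt_rpow_const (Or.inr hγ)).hasDerivWithinAt) hderiv
    (convex_Icc 0 R) hb ha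

/-- `t ↦ |t| ^ γ`, truncated at height `R ^ γ` so that it becomes bounded and Lipschitz. -/
noncomputable def truncPow (R γ t : ℝ) : ℝ := min (|t|) R ^ γ

section truncPow

variable {R γ : ℝ}

lemma truncPow_of_abs_le {t : ℝ} (h : |t| ≤ R) : truncPow R γ t = |t| ^ γ := by
  rw [truncPow, min_eq_left h]

lemma abs_truncPow_le (hR : 0 ≤ R) (hγ : 0 ≤ γ) (t : ℝ) : |truncPow R γ t| ≤ R ^ γ := by
  have h0 : 0 ≤ min (|t|) R := le_min (abs_nonneg t) hR
  rw [truncPow, abs_of_nonneg (Real.rpow_nonneg h0 γ)]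
  exact Real.rpow_le_rpow h0 (min_le_right _ _) hγ

lemma lipschitzWith_truncPow (hR : 0 ≤ R) (hγ : 1 ≤ γ) :
    LipschitzWith ⟨γ * R ^ (γ - 1), by positivity⟩ (truncPow R γ) := by
  refine LipschitzWith.of_dist_le_mul fun s t => ?_
  have hmem : ∀ u : ℝ, min (|u|) R ∈ Set.Icc 0 R := fun u =>
    ⟨le_min (abs_nonneg u) hR, min_le_right _ _⟩
  have hmin : |min (|s|) R - min (|t|) R| ≤ |s - t| := by
    simpa [Real.dist_eq] using ((lipschitzWith_one_norm (E := ℝ)).min_const R).dist_le_mul s t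
  simp only [Real.dist_eq, truncPow]
  calc _ ≤ γ * R ^ (γ - 1) * |min (|s|) R - min (|t|) R| :=
        abs_rpow_sub_rpow_le hγ (hmem s) (hmem t)
    _ ≤ γ * R ^ (γ - 1) * |s - t| := by gcongr

end truncPow

lemma continuous_of_abs_sub_le_mul_rpow {M : Type*} [PseudoMetricSpace M] {f : M → ℝ}
    {K η : ℝ} (hη : 0 < η) (h : ∀ x y, |f x - f y| ≤ K * dist x y ^ η) : Continuous f := by
  refine continuous_iff_continuousAt.2 fun x => tendsto_iff_dist_tendsto_zero.2 ?_
  have hlim : Filter.Tendsto (fun y => K * dist y x ^ η) (nhds x) (nhds 0) := by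
    have := (((continuous_id.dist (continuous_const (y := x))).rpow_const
      fun _ => Or.inr hη.le).const_mul K).tendsto x
    simpa [Real.zero_rpow hη.ne'] using this
  exact squeeze_zero (fun _ => dist_nonneg) (fun y => (Real.dist_eq _ _).trans_le (h y x)) hlim

lemma abs_sub_integral_le {α : Type*} [MeasurableSpace α] {μ : Measure α} [IsProbabilityMeasure μ]
    {f : α → ℝ} {C : ℝ} (hf : ∀ x, |f x| ≤ C) (x : α) : |f x - ∫ y, f y ∂μ| ≤ 2 * C := by
  have hint : |∫ y, f y ∂μ| ≤ C := by
    simpa using norm_integral_le_of_norm_le_const (μ := μ)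
      (.of_forall fun y => (Real.norm_eq_abs _).trans_le (hf y))
  linarith [abs_sub (f x) (∫ y, f y ∂μ), hf x]

lemma rpow_decoupling_error_le {γ Δ R ρ m : ℝ} (hγ : 1 ≤ γ) (hΔ : 0 < Δ) (hR : 0 ≤ R)
    (hRρ : R ≤ Δ * ρ) (hm : 0 ≤ m) (hmρ : m ≤ Δ * ρ) :
    Δ ^ (-γ) * (R ^ γ + γ * R ^ (γ - 1) * m) ≤ (1 + γ) * ρ ^ γ := by
  have hρ : 0 ≤ ρ := nonneg_of_mul_nonneg_right (hR.trans hRρ) hΔ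
  have hRΔ : R / Δ ≤ ρ := (div_le_iff₀' hΔ).2 hRρ
  have hmΔ : m / Δ ≤ ρ := (div_le_iff₀' hΔ).2 hmρ
  have hsplit : Δ ^ (-γ) * (R ^ γ + γ * R ^ (γ - 1) * m)
      = (R / Δ) ^ γ + γ * ((R / Δ) ^ (γ - 1) * (m / Δ)) := by
    have hΔγ : Δ ^ γ = Δ ^ (γ - 1) * Δ := by
      rw [← Real.rpow_add_one' hΔ.le (by linarith), sub_add_cancel]
    rw [Real.div_rpow hR hΔ.le, Real.div_rpow hR hΔ.le, Real.rpow_neg hΔ.le, hΔγ]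
    field_simp
  rw [hsplit]
  calc (R / Δ) ^ γ + γ * ((R / Δ) ^ (γ - 1) * (m / Δ)) ≤ ρ ^ γ + γ * (ρ ^ (γ - 1) * ρ) := by
        gcongr
    _ = (1 + γ) * ρ ^ γ := by
        rw [← Real.rpow_add_one' hρ (by linarith), sub_add_cancel]
        ring

section Replacement

variable {Ω M : Type*} [MeasurableSpace Ω] [MeasurableSpace M] {P : Measure Ω} {μ : Measure M}
  {φ : ℝ → ℝ} {A : ℝ} {Y : ℕ → Ω → ℝ}

noncomputable def shiftedExpectation (P : Measure Ω) (φ : ℝ → ℝ) (Y : ℕ → Ω → ℝ) (j : ℕ)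
    (t : ℝ) : ℝ :=
  ∫ ω, φ (t + ∑ i ∈ range j, Y i ω) ∂P

lemma shiftedExpectation_zero [IsProbabilityMeasure P] : shiftedExpectation P φ Y 0 = φ := by
  ext t
  simp [shiftedExpectation]

variable [IsProbabilityMeasure P]

lemma abs_shiftedExpectation_le (hφA : ∀ t, |φ t| ≤ A) (j : ℕ) (t : ℝ) :
    |shiftedExpectation P φ Y j t| ≤ A := by
  simpa [shiftedExpectation] using norm_integral_le_of_norm_le_const (μ := P)
    (.of_forall fun ω => (Real.norm_eq_abs _).trans_le (hφA (t + ∑ i ∈ range j, Y i ω)))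

lemma integrable_comp_add_sum (hφ : Continuous φ) (hφA : ∀ t, |φ t| ≤ A) {j : ℕ}
    (hY : ∀ i < j, AEMeasurable (Y i) P) (t : ℝ) :
    Integrable (fun ω => φ (t + ∑ i ∈ range j, Y i ω)) P := by
  refine .of_bound ?_ A (.of_forall fun ω => (Real.norm_eq_abs _).trans_le (hφA _))
  refine hφ.comp_aestronglyMeasurable (aemeasurable_const.add ?_).aestronglyMeasurable
  exact Finset.aemeasurable_fun_sum _ fun i hi => hY i (mem_range.1 hi)

lemma continuous_shiftedExpectation (hφ : Continuous φ) (hφA : ∀ t, |φ t| ≤ A) {j : ℕ}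
    (hY : ∀ i < j, AEMeasurable (Y i) P) : Continuous (shiftedExpectation P φ Y j) :=
  continuous_of_dominated (fun t => (integrable_comp_add_sum hφ hφA hY t).1)
    (fun _ => .of_forall fun _ => (Real.norm_eq_abs _).trans_le (hφA _)) (integrable_const A)
    (.of_forall fun _ => hφ.comp (continuous_add_const _))

lemma lipschitzWith_shiftedExpectation {K : ℝ≥0} (hφ : LipschitzWith K φ)
    (hφA : ∀ t, |φ t| ≤ A) {j : ℕ} (hY : ∀ i < j, AEMeasurable (Y i) P) :
    LipschitzWith K (shiftedExpectation P φ Y j) := by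
  refine LipschitzWith.of_dist_le_mul fun s t => ?_
  rw [dist_eq_norm, shiftedExpectation, shiftedExpectation,
    ← integral_sub (integrable_comp_add_sum hφ.continuous hφA hY s)
      (integrable_comp_add_sum hφ.continuous hφA hY t)]
  have hpt : ∀ ω, ‖φ (s + ∑ i ∈ range j, Y i ω) - φ (t + ∑ i ∈ range j, Y i ω)‖
      ≤ K * dist s t := fun ω => by
    rw [← dist_eq_norm]
    exact (hφ.dist_le_mul _ _).trans_eq
      (by rw [Real.dist_eq, Real.dist_eq, add_sub_add_right_eq_sub])
  simpa using norm_integral_le_of_norm_le_const (μ := P) (.of_forall hpt)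

lemma integral_shiftedExpectation_add (hφ : Continuous φ) (hφA : ∀ t, |φ t| ≤ A) {k j : ℕ}
    (hind : iIndepFun (fun i : Fin k => Y i) P) (hY : ∀ i < k, AEMeasurable (Y i) P)
    (hj : j < k) {X : M → ℝ} (hX : IdentDistrib (Y j) X P μ) (t : ℝ) :
    ∫ x, shiftedExpectation P φ Y j (X x + t) ∂μ = shiftedExpectation P φ Y (j + 1) t := by
  set S : Ω → ℝ := fun ω => ∑ i ∈ range j, Y i ω
  have hS : AEMeasurable S P :=
    Finset.aemeasurable_fun_sum _ fun i hi => hY i ((mem_range.1 hi).trans hj)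
  have hSY : IndepFun S (Y j) P := by
    have hsum : S = ∑ i ∈ (range j).attachFin (fun i hi => (mem_range.1 hi).trans hj),
        fun ω => Y (i : ℕ) ω := by
      ext ω
      simp only [S, Finset.sum_apply]
      rw [← Finset.sum_image (f := fun i => Y i ω) Fin.val_injective.injOn,
        Finset.image_val_attachFin]
    rw [hsum]
    exact hind.indepFun_finsetSum_of_notMem₀ (fun i => hY i i.isLt) (i := ⟨j, hj⟩) (by simp)
  have hcont : Continuous fun p : ℝ × ℝ => φ (t + p.1 + p.2) := by fun_prop
  have hψ : Continuous fun b => shiftedExpectation P φ Y j (b + t) :=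
    (continuous_shiftedExpectation hφ hφA fun i hi => hY i (hi.trans hj)).comp
      (continuous_add_const t)
  have := Measure.isProbabilityMeasure_map (μ := P) hS
  have := Measure.isProbabilityMeasure_map (μ := P) hX.aemeasurable_fst
  calc ∫ x, shiftedExpectation P φ Y j (X x + t) ∂μ
      = ∫ b, shiftedExpectation P φ Y j (b + t) ∂(P.map (Y j)) := by
        rw [hX.map_eq, integral_map hX.aemeasurable_snd hψ.aestronglyMeasurable]
    _ = ∫ b, ∫ a, φ (t + a + b) ∂(P.map S) ∂(P.map (Y j)) := by
        refine integral_congr_ae (.of_forall fun b => ?_)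
        simp only [shiftedExpectation]
        rw [integral_map hS (by fun_prop)]
        congr 1 with ω
        simp only [S]
        ring_nf
    _ = ∫ p, φ (t + p.1 + p.2) ∂((P.map S).prod (P.map (Y j))) :=
        (integral_prod_symm _ (.of_bound hcont.aestronglyMeasurable A
          (.of_forall fun p => hφA _))).symm
    _ = ∫ ω, φ (t + S ω + Y j ω) ∂P := by
        rw [← (indepFun_iff_map_prod_eq_prod_map_map hS hX.aemeasurable_fst).1 hSY,
          integral_map (hS.prodMk hX.aemeasurable_fst) hcont.aestronglyMeasurable]
    _ = shiftedExpectation P φ Y (j + 1) t := by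
        simp only [shiftedExpectation, S, sum_range_succ, add_assoc]

/-- Lindeberg's replacement scheme: by `integral_shiftedExpectation_add`, `hstep` bounds the cost
of replacing `X j` by `Y j`. -/
theorem integral_comp_sum_le_of_decoupling [IsProbabilityMeasure μ] (hφ : Continuous φ)
    (hφA : ∀ t, |φ t| ≤ A) {k : ℕ} {X : ℕ → M → ℝ} (hind : iIndepFun (fun i : Fin k => Y i) P)
    (hident : ∀ i < k, IdentDistrib (Y i) (X i) P μ) {ε : ℝ}
    (hstep : ∀ j < k, ∫ x, shiftedExpectation P φ Y j (∑ i ∈ Ico j k, X i x) ∂μ ≤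
      ∫ x₀, ∫ x₁, shiftedExpectation P φ Y j (X j x₀ + ∑ i ∈ Ico (j + 1) k, X i x₁) ∂μ ∂μ + ε) :
    ∫ x, φ (∑ i ∈ range k, X i x) ∂μ ≤ ∫ ω, φ (∑ i ∈ range k, Y i ω) ∂P + k * ε := by
  have hY : ∀ i < k, AEMeasurable (Y i) P := fun i hi => (hident i hi).aemeasurable_fst
  set D : ℕ → ℝ := fun j => ∫ x, shiftedExpectation P φ Y j (∑ i ∈ Ico j k, X i x) ∂μ
  have hD : ∀ j < k, D j - D (j + 1) ≤ ε := by
    intro j hj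
    have hψ := continuous_shiftedExpectation hφ hφA (j := j) fun i hi => hY i (hi.trans hj)
    have hmeas : AEMeasurable (fun p : M × M => X j p.1 + ∑ i ∈ Ico (j + 1) k, X i p.2)
        (μ.prod μ) :=
      (hident j hj).aemeasurable_snd.comp_fst.add (Finset.aemeasurable_fun_sum _ fun i hi =>
        (hident i (mem_Ico.1 hi).2).aemeasurable_snd.comp_snd)
    have hint : Integrable (fun p : M × M => shiftedExpectation P φ Y j
        (X j p.1 + ∑ i ∈ Ico (j + 1) k, X i p.2)) (μ.prod μ) :=
      .of_bound (hψ.comp_aestronglyMeasurable hmeas.aestronglyMeasurable) A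
        (.of_forall fun _ => (Real.norm_eq_abs _).trans_le (abs_shiftedExpectation_le hφA _ _))
    have hdec : ∫ x₀, ∫ x₁, shiftedExpectation P φ Y j
        (X j x₀ + ∑ i ∈ Ico (j + 1) k, X i x₁) ∂μ ∂μ = D (j + 1) := by
      rw [integral_integral_swap hint]
      exact integral_congr_ae (.of_forall fun x₁ =>
        integral_shiftedExpectation_add hφ hφA hind hY hj (hident j hj) _)
    linarith [hstep j hj]
  calc ∫ x, φ (∑ i ∈ range k, X i x) ∂μ = D k + ∑ j ∈ range k, (D j - D (j + 1)) := by
        rw [sum_range_sub', add_sub_cancel]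
        simp only [D, shiftedExpectation_zero, range_eq_Ico]
    _ ≤ D k + k * ε := by
        gcongr
        exact (sum_le_card_nsmul _ _ _ fun j hj => hD j (mem_range.1 hj)).trans_eq (by simp)
    _ = ∫ ω, φ (∑ i ∈ range k, Y i ω) ∂P + k * ε := by
        simp only [D, shiftedExpectation, Ico_self, sum_empty, zero_add, integral_const,
          probReal_univ, one_smul]

theorem integral_abs_sum_rpow_le_of_decoupling [IsProbabilityMeasure μ] {γ B ε : ℝ}
    (hγ : 1 ≤ γ) (hB : 0 ≤ B) {k : ℕ} {X : ℕ → M → ℝ} (hind : iIndepFun (fun i : Fin k => Y i) P)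
    (hident : ∀ i < k, IdentDistrib (Y i) (X i) P μ) (hXB : ∀ i < k, ∀ x, |X i x| ≤ B)
    (hstep : ∀ j < k,
      ∫ x, shiftedExpectation P (truncPow (k * B) γ) Y j (∑ i ∈ Ico j k, X i x) ∂μ ≤
        ∫ x₀, ∫ x₁, shiftedExpectation P (truncPow (k * B) γ) Y j
          (X j x₀ + ∑ i ∈ Ico (j + 1) k, X i x₁) ∂μ ∂μ + ε) :
    ∫ x, |∑ i ∈ range k, X i x| ^ γ ∂μ ≤ ∫ ω, |∑ i ∈ range k, Y i ω| ^ γ ∂P + k * ε := by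
  have hR : (0 : ℝ) ≤ k * B := by positivity
  have hsum : ∀ f : ℕ → ℝ, (∀ i < k, |f i| ≤ B) → truncPow (k * B) γ (∑ i ∈ range k, f i)
      = |∑ i ∈ range k, f i| ^ γ := fun f hf => truncPow_of_abs_le <|
    (abs_sum_le_sum_abs _ _).trans <|
      (sum_le_card_nsmul _ _ _ fun i hi => hf i (mem_range.1 hi)).trans_eq (by simp)
  have hYB : ∀ᵐ ω ∂P, ∀ i < k, |Y i ω| ≤ B := by
    refine ae_all_iff.2 fun i => ?_
    by_cases hi : i < k
    · exact ((hident i hi).symm.ae_snd (measurableSet_le measurable_abs measurable_const)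
        (.of_forall (hXB i hi))).mono fun _ h _ => h
    · exact .of_forall fun _ h => absurd h hi
  calc ∫ x, |∑ i ∈ range k, X i x| ^ γ ∂μ = ∫ x, truncPow (k * B) γ (∑ i ∈ range k, X i x) ∂μ :=
        integral_congr_ae (.of_forall fun x => (hsum _ fun i hi => hXB i hi x).symm)
    _ ≤ ∫ ω, truncPow (k * B) γ (∑ i ∈ range k, Y i ω) ∂P + k * ε :=
        integral_comp_sum_le_of_decoupling (lipschitzWith_truncPow hR hγ).continuous
          (abs_truncPow_le hR (by linarith)) hind hident hstep
    _ = ∫ ω, |∑ i ∈ range k, Y i ω| ^ γ ∂P + k * ε := by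
        congr 1
        exact integral_congr_ae (hYB.mono fun ω h => hsum _ h)

end Replacement

/-- `𝕊_{v,w}(a, b)` along a trajectory `y : ℕ → M`; along the orbit `u ↦ T^[u] x` this is the
iterated sum `∑_{a ≤ l < j < b} v(T^l x) w(T^j x)`. -/
def iteratedSum {M : Type*} (v w : M → ℝ) (a b : ℕ) (y : ℕ → M) : ℝ :=
  ∑ j ∈ Ico a b, ∑ l ∈ Ico a j, v (y l) * w (y j)

section IteratedSum

variable {M : Type*} {v w : M → ℝ} {a b : ℕ}

lemma iteratedSum_congr {y y' : ℕ → M} (h : ∀ u, a ≤ u → u < b → y u = y' u) :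
    iteratedSum v w a b y = iteratedSum v w a b y' := by
  refine sum_congr rfl fun j hj => sum_congr rfl fun l hl => ?_
  rw [mem_Ico] at hj hl
  rw [h j hj.1 hj.2, h l hl.1 (hl.2.trans hj.2)]

lemma measurable_iteratedSum [MeasurableSpace M] (hv : Measurable v) (hw : Measurable w) :
    Measurable (iteratedSum v w a b) :=
  Finset.measurable_sum _ fun j _ => Finset.measurable_sum _ fun l _ =>
    (hv.comp (measurable_pi_apply l)).mul (hw.comp (measurable_pi_apply j))

lemma abs_iteratedSum_le {Vinf Winf : ℝ} (hv : ∀ x, |v x| ≤ Vinf) (hw : ∀ x, |w x| ≤ Winf)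
    (y : ℕ → M) : |iteratedSum v w a b y| ≤ (b - a : ℕ) ^ 2 * (Vinf * Winf) := by
  have hterm : ∀ l j, |v (y l) * w (y j)| ≤ Vinf * Winf := fun l j => by
    rw [abs_mul]
    exact mul_le_mul (hv _) (hw _) (abs_nonneg _) ((abs_nonneg _).trans (hv (y l)))
  have hinner : ∀ j ∈ Ico a b, |∑ l ∈ Ico a j, v (y l) * w (y j)| ≤ (b - a : ℕ) * (Vinf * Winf) :=
    fun j hj => by
      refine (abs_sum_le_sum_abs _ _).trans
        ((sum_le_card_nsmul _ _ _ fun l _ => hterm l j).trans ?_)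
      rw [nsmul_eq_mul, Nat.card_Ico]
      gcongr
      · exact (abs_nonneg _).trans (hterm a a)
      · exact (mem_Ico.1 hj).2.le
  calc |iteratedSum v w a b y| ≤ ∑ j ∈ Ico a b, |∑ l ∈ Ico a j, v (y l) * w (y j)| :=
        abs_sum_le_sum_abs _ _
    _ ≤ (b - a : ℕ) * ((b - a : ℕ) * (Vinf * Winf)) := by
        refine (sum_le_card_nsmul _ _ _ hinner).trans_eq ?_
        rw [nsmul_eq_mul, Nat.card_Ico]
    _ = (b - a : ℕ) ^ 2 * (Vinf * Winf) := by ring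

variable [PseudoMetricSpace M] {η Vinf Vh Winf Wh : ℝ}
  (hv : ∀ x, |v x| ≤ Vinf) (hvh : ∀ x y, |v x - v y| ≤ Vh * dist x y ^ η)
  (hw : ∀ x, |w x| ≤ Winf) (hwh : ∀ x y, |w x - w y| ≤ Wh * dist x y ^ η)
include hv hvh hw hwh

lemma abs_mul_sub_mul_le (p p' q q' : M) :
    |v p * w q - v p' * w q'| ≤ Vh * Winf * dist p p' ^ η + Vinf * Wh * dist q q' ^ η := by
  calc |v p * w q - v p' * w q'| = |(v p - v p') * w q + v p' * (w q - w q')| := by ring_nf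
    _ ≤ |v p - v p'| * |w q| + |v p'| * |w q - w q'| := by
        rw [← abs_mul, ← abs_mul]
        exact abs_add_le _ _
    _ ≤ Vh * dist p p' ^ η * Winf + Vinf * (Wh * dist q q' ^ η) :=
        add_le_add (mul_le_mul (hvh _ _) (hw _) (abs_nonneg _) ((abs_nonneg _).trans (hvh _ _)))
          (mul_le_mul (hv _) (hwh _ _) (abs_nonneg _) ((abs_nonneg _).trans (hv p')))
    _ = Vh * Winf * dist p p' ^ η + Vinf * Wh * dist q q' ^ η := by ring

lemma abs_iteratedSum_sub_update_le (hη : 0 < η) (a b : ℕ) (y : ℕ → M) (u : ℕ) (z : M) :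
    |iteratedSum v w a b y - iteratedSum v w a b (update y u z)|
      ≤ (b - a : ℕ) * (Vh * Winf + Vinf * Wh) * dist (y u) z ^ η := by
  set d := dist (y u) z ^ η
  set α := Vh * Winf * d
  set β := Vinf * Wh * d
  have hα : 0 ≤ α := mul_nonneg ((abs_nonneg _).trans (hvh (y u) z))
    ((abs_nonneg _).trans (hw z)) |>.trans_eq (by ring)
  have hβ : 0 ≤ β := mul_nonneg ((abs_nonneg _).trans (hv z))
    ((abs_nonneg _).trans (hwh (y u) z)) |>.trans_eq (by ring)
  have hterm : ∀ l j, |v (y l) * w (y j) - v (update y u z l) * w (update y u z j)|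
      ≤ (if l = u then α else 0) + (if j = u then β else 0) := fun l j => by
    refine (abs_mul_sub_mul_le hv hvh hw hwh _ _ _ _).trans_eq ?_
    by_cases hl : l = u <;> by_cases hj : j = u <;>
      simp [hl, hj, α, β, d, Real.zero_rpow hη.ne']
  have hsingle : ∀ (s : Finset ℕ) {c : ℝ}, 0 ≤ c → ∑ l ∈ s, (if l = u then c else 0) ≤ c :=
    fun s c hc => by
      rw [sum_ite_eq']
      split_ifs
      exacts [le_rfl, hc]
  calc |iteratedSum v w a b y - iteratedSum v w a b (update y u z)|
      ≤ ∑ j ∈ Ico a b, ∑ l ∈ Ico a j,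
          |v (y l) * w (y j) - v (update y u z l) * w (update y u z j)| := by
        rw [iteratedSum, iteratedSum, ← sum_sub_distrib]
        refine (abs_sum_le_sum_abs _ _).trans (sum_le_sum fun j _ => ?_)
        rw [← sum_sub_distrib]
        exact abs_sum_le_sum_abs _ _
    _ ≤ ∑ j ∈ Ico a b, ∑ l ∈ Ico a j, ((if l = u then α else 0) + (if j = u then β else 0)) := by
        gcongr with j _ l _
        exact hterm l j
    _ ≤ ∑ j ∈ Ico a b, (α + (b - a : ℕ) * (if j = u then β else 0)) := by
        gcongr with j hj
        rw [sum_add_distrib, sum_const, nsmul_eq_mul, Nat.card_Ico]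
        gcongr
        · exact hsingle _ hα
        · exact (mem_Ico.1 hj).2.le
    _ ≤ (b - a : ℕ) * (α + β) := by
        rw [sum_add_distrib, sum_const, Nat.card_Ico, nsmul_eq_mul, ← mul_sum, mul_add]
        gcongr
        exact hsingle _ hβ
    _ = (b - a : ℕ) * (Vh * Winf + Vinf * Wh) * d := by ring

/-- Only one of the disjoint blocks `[a (2i), a (2i+1))` can contain the changed time `u`. -/
lemma abs_sum_iteratedSum_sub_update_le (hη : 0 < η) {a : ℕ → ℕ} (ha : Monotone a)
    (I : Finset ℕ) {ℓ : ℕ} (hℓ : ∀ i ∈ I, a (2 * i + 1) - a (2 * i) ≤ ℓ) (y : ℕ → M) (u : ℕ)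
    (z : M) :
    |∑ i ∈ I, iteratedSum v w (a (2 * i)) (a (2 * i + 1)) y
        - ∑ i ∈ I, iteratedSum v w (a (2 * i)) (a (2 * i + 1)) (update y u z)|
      ≤ ℓ * (Vh * Winf + Vinf * Wh) * dist (y u) z ^ η := by
  set c := ℓ * (Vh * Winf + Vinf * Wh) * dist (y u) z ^ η
  have hc : 0 ≤ (Vh * Winf + Vinf * Wh) * dist (y u) z ^ η :=
    (abs_nonneg _).trans ((abs_mul_sub_mul_le hv hvh hw hwh _ z _ z).trans_eq (by ring))
  have hc0 : 0 ≤ c := mul_nonneg ℓ.cast_nonneg hc |>.trans_eq (mul_assoc _ _ _).symm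
  set inBlock : ℕ → Prop := fun i => u ∈ Ico (a (2 * i)) (a (2 * i + 1))
  have hblock : ∀ i ∈ I, |iteratedSum v w (a (2 * i)) (a (2 * i + 1)) y
      - iteratedSum v w (a (2 * i)) (a (2 * i + 1)) (update y u z)|
        ≤ if inBlock i then c else 0 := fun i hi => by
    split_ifs with hu
    · refine (abs_iteratedSum_sub_update_le hv hvh hw hwh hη _ _ y u z).trans ?_
      simp only [c, mul_assoc]
      gcongr
      exact hℓ i hi
    · have hne : ∀ x, a (2 * i) ≤ x → x < a (2 * i + 1) → x ≠ u := by
        rintro x hx1 hx2 rfl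
        exact hu (mem_Ico.2 ⟨hx1, hx2⟩)
      rw [iteratedSum_congr (y := update y u z) (y' := y)
        fun x hx1 hx2 => update_of_ne (hne x hx1 hx2) _ _, sub_self, abs_zero]
  have hone : (I.filter inBlock).card ≤ 1 := by
    refine card_le_one.2 fun i hi i' hi' => ?_
    simp only [mem_filter, inBlock, mem_Ico] at hi hi'
    by_contra hne
    rcases Nat.lt_or_gt_of_ne hne with h | h
    · have := ha (show 2 * i + 1 ≤ 2 * i' by omega); omega
    · have := ha (show 2 * i' + 1 ≤ 2 * i by omega); omega
  calc _ ≤ ∑ i ∈ I, |iteratedSum v w (a (2 * i)) (a (2 * i + 1)) y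
        - iteratedSum v w (a (2 * i)) (a (2 * i + 1)) (update y u z)| := by
        rw [← sum_sub_distrib]
        exact abs_sum_le_sum_abs _ _
    _ ≤ ∑ i ∈ I, if inBlock i then c else 0 := sum_le_sum hblock
    _ ≤ c := by
        rw [← sum_filter, sum_const, nsmul_eq_mul]
        exact mul_le_of_le_one_left hc0 (by exact_mod_cast hone)

end IteratedSum

/-- The Functional Correlation Bound for functionals `H` of a trajectory that only look at the
times in `[b, c) ∪ [g, N)`; in the decoupled trajectory the times `< c` are read from `x₀` and the
later ones from `x₁`. -/
def TrajectoryCorrelationBound {M : Type*} [MetricSpace M] [MeasurableSpace M] (μ : Measure M)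
    (T : M → M) (η γ C₀ : ℝ) : Prop :=
  ∀ ⦃b c g N : ℕ⦄, b < c → c ≤ g → g ≤ N →
    ∀ H : (ℕ → M) → ℝ, Measurable H →
    (∀ y y' : ℕ → M, (∀ u ∈ Ico b c ∪ Ico g N, y u = y' u) → H y = H y') →
    ∀ A h : ℝ, 0 ≤ A → 0 ≤ h → (∀ y, |H y| ≤ A) →
    (∀ y u z, |H y - H (update y u z)| ≤ h * dist (y u) z ^ η) →
    |(∫ x, H (fun u => T^[u] x) ∂μ) -
        ∫ x₀, ∫ x₁, H (fun u => T^[u] (if u < c then x₀ else x₁)) ∂μ ∂μ|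
      ≤ C₀ * ((g - c + 1 : ℕ) : ℝ) ^ (-γ) * (A + (c - b + (N - g) : ℕ) * h)

section Window

variable {b c g : ℕ}

/-- Enumeration `0, 1, … ↦ b, …, c - 1, g, g + 1, …` of the window `[b, c) ∪ [g, ∞)`. -/
def windowTime (b c g i : ℕ) : ℕ := if i < c - b then b + i else g + (i - (c - b))

/-- Inverse of `windowTime` on the window. -/
def windowIndex (b c g u : ℕ) : ℕ := if u < c then u - b else c - b + (u - g)

lemma monotone_windowTime (hcg : c ≤ g) : Monotone (windowTime b c g) :=
  monotone_nat_of_le_succ fun i => by unfold windowTime; split_ifs <;> omega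

variable {N u : ℕ} (hu : u ∈ Ico b c ∪ Ico g N)
include hu

lemma windowTime_windowIndex (hcg : c ≤ g) : windowTime b c g (windowIndex b c g u) = u := by
  simp only [mem_union, mem_Ico] at hu
  unfold windowTime windowIndex; split_ifs <;> omega

lemma windowIndex_lt (hcg : c ≤ g) : windowIndex b c g u < c - b + (N - g) := by
  simp only [mem_union, mem_Ico] at hu
  unfold windowIndex; split_ifs <;> omega

lemma windowIndex_lt_sub_iff (hcg : c ≤ g) : windowIndex b c g u < c - b ↔ u < c := by
  simp only [mem_union, mem_Ico] at hu
  unfold windowIndex; split_ifs <;> omega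

end Window

lemma windowIndex_windowTime {b c g N i : ℕ} (hcg : c ≤ g) (hi : i < c - b + (N - g)) :
    windowIndex b c g (windowTime b c g i) = i ∧ windowTime b c g i ∈ Ico b c ∪ Ico g N := by
  simp only [mem_union, mem_Ico]
  unfold windowTime windowIndex; split_ifs <;> omega

lemma integral_integral_glued_eq {M : Type*} [MeasurableSpace M] {μ : Measure M}
    [IsProbabilityMeasure μ] {T : M → M} {c : ℕ} {H : (ℕ → M) → ℝ}
    (hdep : ∀ y y' : ℕ → M, (∀ u < c, y u = y' u) → H y = H y') :
    ∫ x₀, ∫ x₁, H (fun u => T^[u] (if u < c then x₀ else x₁)) ∂μ ∂μ =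
      ∫ x, H (fun u => T^[u] x) ∂μ := by
  have hpast : ∀ x₀ x₁ : M,
      H (fun u => T^[u] (if u < c then x₀ else x₁)) = H (fun u => T^[u] x₀) :=
    fun x₀ x₁ => hdep _ _ fun u hu => by rw [if_pos hu]
  simp only [hpast, integral_const, probReal_univ, one_smul]

lemma abs_comp_sub_comp_update_le {M ι : Type*} [PseudoMetricSpace M] [DecidableEq ι]
    {H : (ℕ → M) → ℝ} {W : Set ℕ} {h η : ℝ}
    (hdep : ∀ y y' : ℕ → M, (∀ u ∈ W, y u = y' u) → H y = H y')
    (hH : ∀ y u z, |H y - H (update y u z)| ≤ h * dist (y u) z ^ η)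
    {idx : ℕ → ι} {time : ι → ℕ} (hidx_time : ∀ t, idx (time t) = t)
    (htime_idx : ∀ u ∈ W, time (idx u) = u) (t : ι) (x : ι → M) (z : M) :
    |H (fun u => x (idx u)) - H (fun u => update x t z (idx u))| ≤ h * dist (x t) z ^ η := by
  have hupd : H (fun u => update x t z (idx u)) = H (update (fun u => x (idx u)) (time t) z) :=
    hdep _ _ fun u hu => by
      by_cases hut : u = time t
      · subst hut
        simp [hidx_time]
      · have hne : idx u ≠ t := fun h => hut (by rw [← h, htime_idx u hu])
        simp [hne, hut]
  simpa [hupd, hidx_time] using hH (fun u => x (idx u)) (time t) z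

theorem FunctionalCorrelationBound.exists_trajectoryCorrelationBound {M : Type*} [MetricSpace M]
    [MeasurableSpace M] {μ : Measure M} [IsProbabilityMeasure μ] {T : M → M} {η γ : ℝ}
    (hF : FunctionalCorrelationBound μ T η γ) :
    ∃ C₀, 0 < C₀ ∧ TrajectoryCorrelationBound μ T η γ C₀ := by
  obtain ⟨C₀, hC₀, hF⟩ := hF
  refine ⟨C₀, hC₀, fun b c g N hbc hcg hgN H hH hdep A h hA hh hHA hHh => ?_⟩
  rcases hgN.eq_or_lt with rfl | hgN
  · rw [integral_integral_glued_eq fun y y' hyy => hdep y y' fun u hu => hyy u (by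
      simp only [mem_union, mem_Ico] at hu; omega), sub_self, abs_zero]
    positivity
  set p := c - b
  set q := p + (N - g)
  have hq : 0 < q := by omega
  set time := windowTime b c g
  -- `% q` only serves to land in `Fin q`; on the window it is the identity.
  set idx : ℕ → Fin q := fun u => ⟨windowIndex b c g u % q, Nat.mod_lt _ hq⟩
  have hidx : ∀ u ∈ Ico b c ∪ Ico g N, (idx u : ℕ) = windowIndex b c g u := fun u hu =>
    Nat.mod_eq_of_lt (windowIndex_lt hu hcg)
  have htime_idx : ∀ u ∈ Ico b c ∪ Ico g N, time (idx u) = u := fun u hu => by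
    simp only [hidx u hu, windowTime_windowIndex hu hcg, time]
  have hidx_time : ∀ t : Fin q, idx (time t) = t := fun t => by
    obtain ⟨h1, h2⟩ := windowIndex_windowTime (N := N) hcg t.isLt
    exact Fin.ext ((hidx _ h2).trans h1)
  set G : (Fin q → M) → ℝ := fun x => H (fun u => x (idx u))
  have hG_orbit : ∀ x, G (fun i => T^[time i] x) = H (fun u => T^[u] x) := fun x =>
    hdep _ _ fun u hu => by simp only [htime_idx u hu]
  have hG_glued : ∀ x₀ x₁, G (fun i => if (i : ℕ) < p then T^[time i] x₀ else T^[time i] x₁) =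
      H (fun u => T^[u] (if u < c then x₀ else x₁)) := fun x₀ x₁ => hdep _ _ fun u hu => by
    have hlt : (idx u : ℕ) < p ↔ u < c := by rw [hidx u hu]; exact windowIndex_lt_sub_iff hu hcg
    simp only [hlt, htime_idx u hu]
    split_ifs <;> rfl
  have hgap : (time p : ℝ) - time (p - 1) = (g - c + 1 : ℕ) := by
    have h1 : time p = g := by simp [time, windowTime, p]
    have h2 : time (p - 1) + 1 = c := by simp only [time, windowTime]; split_ifs <;> omega
    rw [sub_eq_iff_eq_add, h1]
    exact_mod_cast (by omega : g = g - c + 1 + time (p - 1))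
  have hbound := hF q p (by omega) time (monotone_windowTime hcg)
    (by simp only [time, windowTime]; split_ifs <;> omega) G
    (hH.comp (measurable_pi_lambda _ fun u => measurable_pi_apply _)) A hA (fun _ => hHA _)
    (fun _ => h) (fun _ => hh) (abs_comp_sub_comp_update_le hdep hHh hidx_time htime_idx)
  simpa [hG_orbit, hG_glued, hgap, q] using hbound

/-- The paper's `a_i = ⌊i n / (2k)⌋`. -/
def blockBoundary (k n i : ℕ) : ℕ := i * n / (2 * k)

section blockBoundary

variable {k n : ℕ}

lemma blockBoundary_add_le (i : ℕ) :
    blockBoundary k n i + n / (2 * k) ≤ blockBoundary k n (i + 1) := by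
  rw [blockBoundary, blockBoundary, add_mul, one_mul]
  exact Nat.div_add_div_le_add_div

lemma blockBoundary_succ_le (i : ℕ) :
    blockBoundary k n (i + 1) ≤ blockBoundary k n i + (n / (2 * k) + 1) := by
  rw [blockBoundary, blockBoundary, add_mul, one_mul, ← add_assoc]
  exact Nat.add_div_le_div_add_div_add_one _ _ _

lemma one_le_div_two_mul (hk : 0 < k) (hn : 2 * k ≤ n) : 1 ≤ n / (2 * k) :=
  (Nat.one_le_div_iff (by omega)).2 hn

lemma strictMono_blockBoundary (hk : 0 < k) (hn : 2 * k ≤ n) :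
    StrictMono (blockBoundary k n) :=
  strictMono_nat_of_lt_succ fun i => by
    have := blockBoundary_add_le (k := k) (n := n) i
    have := one_le_div_two_mul hk hn
    omega

lemma blockBoundary_two_mul_self (hk : 0 < k) : blockBoundary k n (2 * k) = n :=
  Nat.mul_div_cancel_left n (by omega)

lemma mul_div_two_mul_add_one_le (hk : 0 < k) (hn : 2 * k ≤ n) : k * (n / (2 * k) + 1) ≤ n := by
  have h1 := Nat.div_mul_le_self n (2 * k)
  have h2 := one_le_div_two_mul hk hn
  nlinarith

lemma div_two_mul_add_one_le_blockBoundary_sub (i : ℕ) :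
    n / (2 * k) + 1 ≤ blockBoundary k n (i + 1) - blockBoundary k n i + 1 := by
  have := blockBoundary_add_le (k := k) (n := n) i
  omega

lemma blockBoundary_sub_add_sub_le {j : ℕ} (hk : 0 < k) (hn : 2 * k ≤ n) (hj : j < k) :
    blockBoundary k n (2 * j + 1) - blockBoundary k n (2 * j) +
      (blockBoundary k n (2 * k) - blockBoundary k n (2 * j + 2)) ≤ n := by
  have hmono := (strictMono_blockBoundary hk hn).monotone
  have h1 : blockBoundary k n (2 * j + 2) ≤ blockBoundary k n (2 * k) := hmono (by omega)
  have h2 : blockBoundary k n (2 * j) ≤ blockBoundary k n (2 * j + 1) := hmono (by omega)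
  have h3 : blockBoundary k n (2 * j + 1) ≤ blockBoundary k n (2 * j + 2) := hmono (by omega)
  have h4 := blockBoundary_two_mul_self (n := n) hk
  omega

/-- The gap `≥ n / (2k)` separating block `j` from the later blocks beats the size
`≲ k (n / 2k) ^ 2 ‖v‖ ‖w‖` of their sum. -/
lemma blockBoundary_decoupling_error_le {γ R Vinf Vh Winf Wh : ℝ} (hγ : 1 ≤ γ) (hR0 : 0 ≤ R)
    (hVinf : 0 ≤ Vinf) (hVh : 0 ≤ Vh) (hWinf : 0 ≤ Winf) (hWh : 0 ≤ Wh) {j : ℕ} (hk : 0 < k)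
    (hn : 2 * k ≤ n) (hj : j < k)
    (hR : R ≤ k * (2 * ((n / (2 * k) + 1 : ℕ) ^ 2 * (Vinf * Winf)))) :
    ((blockBoundary k n (2 * j + 2) - blockBoundary k n (2 * j + 1) + 1 : ℕ) : ℝ) ^ (-γ) *
        (R ^ γ + ((blockBoundary k n (2 * j + 1) - blockBoundary k n (2 * j) +
          (blockBoundary k n (2 * k) - blockBoundary k n (2 * j + 2)) : ℕ) : ℝ) *
          (γ * R ^ (γ - 1) * ((n / (2 * k) + 1 : ℕ) * (Vh * Winf + Vinf * Wh))))
      ≤ 2 ^ γ * (1 + γ) * ((n : ℝ) ^ γ * ((Vinf + Vh) ^ γ * (Winf + Wh) ^ γ)) := by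
  have hℓΔ : ((n / (2 * k) + 1 : ℕ) : ℝ)
      ≤ (blockBoundary k n (2 * j + 2) - blockBoundary k n (2 * j + 1) + 1 : ℕ) := by
    exact_mod_cast div_two_mul_add_one_le_blockBoundary_sub (2 * j + 1)
  have hqn : ((blockBoundary k n (2 * j + 1) - blockBoundary k n (2 * j) +
      (blockBoundary k n (2 * k) - blockBoundary k n (2 * j + 2)) : ℕ) : ℝ) ≤ n := by
    exact_mod_cast blockBoundary_sub_add_sub_le hk hn hj
  set ℓ := n / (2 * k) + 1
  set Δ := blockBoundary k n (2 * j + 2) - blockBoundary k n (2 * j + 1) + 1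
  set q := blockBoundary k n (2 * j + 1) - blockBoundary k n (2 * j) +
    (blockBoundary k n (2 * k) - blockBoundary k n (2 * j + 2))
  have hkℓ : (k : ℝ) * ℓ ≤ n := by exact_mod_cast mul_div_two_mul_add_one_le hk hn
  have hVW : Vinf * Winf ≤ (Vinf + Vh) * (Winf + Wh) := by nlinarith
  have hc : Vh * Winf + Vinf * Wh ≤ (Vinf + Vh) * (Winf + Wh) := by nlinarith
  set ρ := 2 * n * ((Vinf + Vh) * (Winf + Wh))
  have hRρ : R ≤ Δ * ρ := calc
    R ≤ 2 * (k * ℓ) * ℓ * (Vinf * Winf) := hR.trans_eq (by ring)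
    _ ≤ 2 * n * Δ * ((Vinf + Vh) * (Winf + Wh)) := by gcongr
    _ = Δ * ρ := by ring
  have hmρ : q * (ℓ * (Vh * Winf + Vinf * Wh)) ≤ Δ * ρ := calc
    _ ≤ n * (Δ * ((Vinf + Vh) * (Winf + Wh))) := by gcongr
    _ ≤ Δ * ρ := by
        have : 0 ≤ (n : ℝ) * (Δ * ((Vinf + Vh) * (Winf + Wh))) := by positivity
        linarith
  calc _ = (Δ : ℝ) ^ (-γ) * (R ^ γ + γ * R ^ (γ - 1) * (q * (ℓ * (Vh * Winf + Vinf * Wh)))) := by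
        ring
    _ ≤ (1 + γ) * ρ ^ γ :=
        rpow_decoupling_error_le hγ (by positivity) hR0 hRρ (by positivity) hmρ
    _ = 2 ^ γ * (1 + γ) * ((n : ℝ) ^ γ * ((Vinf + Vh) ^ γ * (Winf + Wh) ^ γ)) := by
        simp only [ρ]
        rw [Real.mul_rpow (by positivity) (by positivity), Real.mul_rpow (by positivity)
          (by positivity), Real.mul_rpow (by positivity) (by positivity)]
        ring

end blockBoundary

section Blocks

variable {M : Type*} [MetricSpace M] [MeasurableSpace M] [BorelSpace M] {μ : Measure M}
  {T : M → M} {η γ C₀ : ℝ} {v w : M → ℝ} {Vinf Vh Winf Wh : ℝ}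

lemma abs_integral_sub_integral_decoupled_le (hF : TrajectoryCorrelationBound μ T η γ C₀)
    (hη : 0 < η) (hVinf : 0 ≤ Vinf) (hVh : 0 ≤ Vh) (hWinf : 0 ≤ Winf) (hWh : 0 ≤ Wh)
    (hv : ∀ x, |v x| ≤ Vinf) (hvh : ∀ x y, |v x - v y| ≤ Vh * dist x y ^ η)
    (hw : ∀ x, |w x| ≤ Winf) (hwh : ∀ x y, |w x - w y| ≤ Wh * dist x y ^ η)
    {a : ℕ → ℕ} (ha : StrictMono a) {k j ℓ : ℕ} (hj : j < k)
    (hℓ : ∀ i, a (2 * i + 1) - a (2 * i) ≤ ℓ) {m : ℕ → ℝ} {X : ℕ → M → ℝ}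
    (hX : ∀ i < k, ∀ x,
      X i x = iteratedSum v w (a (2 * i)) (a (2 * i + 1)) (fun u => T^[u] x) - m i)
    {ψ : ℝ → ℝ} {K : ℝ≥0} {A : ℝ} (hψ : LipschitzWith K ψ) (hψA : ∀ t, |ψ t| ≤ A) :
    |∫ x, ψ (∑ i ∈ Ico j k, X i x) ∂μ -
        ∫ x₀, ∫ x₁, ψ (X j x₀ + ∑ i ∈ Ico (j + 1) k, X i x₁) ∂μ ∂μ|
      ≤ C₀ * ((a (2 * j + 2) - a (2 * j + 1) + 1 : ℕ) : ℝ) ^ (-γ) *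
        (A + (a (2 * j + 1) - a (2 * j) + (a (2 * k) - a (2 * j + 2)) : ℕ) *
          (K * (ℓ * (Vh * Winf + Vinf * Wh)))) := by
  set F : (ℕ → M) → ℝ := fun y =>
    ∑ i ∈ Ico j k, (iteratedSum v w (a (2 * i)) (a (2 * i + 1)) y - m i)
  have hFm : Measurable F := Finset.measurable_sum _ fun i _ =>
    (measurable_iteratedSum (continuous_of_abs_sub_le_mul_rpow hη hvh).measurable
      (continuous_of_abs_sub_le_mul_rpow hη hwh).measurable).sub_const _
  have hwindow : ∀ y y' : ℕ → M,
      (∀ u ∈ Ico (a (2 * j)) (a (2 * j + 1)) ∪ Ico (a (2 * j + 2)) (a (2 * k)), y u = y' u) →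
      F y = F y' := fun y y' hyy => sum_congr rfl fun i hi => by
    rw [mem_Ico] at hi
    rw [iteratedSum_congr fun u hu₁ hu₂ => hyy u ?_]
    rcases hi.1.eq_or_lt with rfl | hji
    · exact mem_union_left _ (mem_Ico.2 ⟨hu₁, hu₂⟩)
    · exact mem_union_right _ (mem_Ico.2 ⟨(ha.monotone (by omega)).trans hu₁,
        hu₂.trans_le (ha.monotone (by omega))⟩)
  have hFh : ∀ y u z, |ψ (F y) - ψ (F (update y u z))|
      ≤ K * (ℓ * (Vh * Winf + Vinf * Wh)) * dist (y u) z ^ η := fun y u z => by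
    refine (hψ.dist_le_mul _ _).trans ?_
    rw [Real.dist_eq, mul_assoc]
    gcongr
    simp only [F, sum_sub_distrib, sub_sub_sub_cancel_right]
    exact abs_sum_iteratedSum_sub_update_le hv hvh hw hwh hη ha.monotone _ (fun i _ => hℓ i) y u z
  have hbound := hF (ha (by omega : 2 * j < 2 * j + 1)) (ha.monotone (by omega))
    (ha.monotone (by omega : 2 * j + 2 ≤ 2 * k)) (ψ ∘ F) (hψ.continuous.measurable.comp hFm)
    (fun y y' h => congrArg ψ (hwindow y y' h)) A _ ((abs_nonneg _).trans (hψA 0))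
    (by positivity) (fun _ => hψA _) hFh
  have horbit : ∀ x, F (fun u => T^[u] x) = ∑ i ∈ Ico j k, X i x := fun x =>
    sum_congr rfl fun i hi => (hX i (mem_Ico.1 hi).2 x).symm
  have hglued : ∀ x₀ x₁, F (fun u => T^[u] (if u < a (2 * j + 1) then x₀ else x₁)) =
      X j x₀ + ∑ i ∈ Ico (j + 1) k, X i x₁ := fun x₀ x₁ => by
    simp only [F]
    rw [sum_eq_sum_Ico_succ_bot hj, hX j hj]
    congr 1
    · exact congrArg (· - m j) (iteratedSum_congr fun u _ hu => by rw [if_pos hu])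
    · refine sum_congr rfl fun i hi => ?_
      rw [mem_Ico] at hi
      rw [hX i hi.2, iteratedSum_congr fun u hu _ => ?_]
      rw [if_neg (not_lt.2 ((ha.monotone (by omega)).trans hu))]
  simpa only [Function.comp, horbit, hglued] using hbound

lemma integral_le_integral_decoupled_add (hF : TrajectoryCorrelationBound μ T η γ C₀)
    (hC₀ : 0 ≤ C₀) (hγ : 1 ≤ γ) (hη : 0 < η)
    (hVinf : 0 ≤ Vinf) (hVh : 0 ≤ Vh) (hWinf : 0 ≤ Winf) (hWh : 0 ≤ Wh)
    (hv : ∀ x, |v x| ≤ Vinf) (hvh : ∀ x y, |v x - v y| ≤ Vh * dist x y ^ η)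
    (hw : ∀ x, |w x| ≤ Winf) (hwh : ∀ x y, |w x - w y| ≤ Wh * dist x y ^ η)
    {k n j : ℕ} (hk : 0 < k) (hn : 2 * k ≤ n) (hj : j < k) {m : ℕ → ℝ} {X : ℕ → M → ℝ}
    (hX : ∀ i < k, ∀ x, X i x = iteratedSum v w (blockBoundary k n (2 * i))
      (blockBoundary k n (2 * i + 1)) (fun u => T^[u] x) - m i)
    {R : ℝ} (hR0 : 0 ≤ R) (hR : R ≤ k * (2 * ((n / (2 * k) + 1 : ℕ) ^ 2 * (Vinf * Winf))))
    {ψ : ℝ → ℝ} {K : ℝ≥0} (hψ : LipschitzWith K ψ) (hK : (K : ℝ) ≤ γ * R ^ (γ - 1))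
    (hψR : ∀ t, |ψ t| ≤ R ^ γ) :
    ∫ x, ψ (∑ i ∈ Ico j k, X i x) ∂μ ≤
      ∫ x₀, ∫ x₁, ψ (X j x₀ + ∑ i ∈ Ico (j + 1) k, X i x₁) ∂μ ∂μ +
        C₀ * 2 ^ γ * (1 + γ) * ((n : ℝ) ^ γ * ((Vinf + Vh) ^ γ * (Winf + Wh) ^ γ)) := by
  have hℓ : ∀ i, blockBoundary k n (2 * i + 1) - blockBoundary k n (2 * i) ≤ n / (2 * k) + 1 :=
    fun i => Nat.sub_le_iff_le_add'.2 (blockBoundary_succ_le _)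
  have hdec := abs_integral_sub_integral_decoupled_le hF hη hVinf hVh hWinf hWh hv hvh hw hwh
    (strictMono_blockBoundary hk hn) hj hℓ hX hψ hψR
  have herr := blockBoundary_decoupling_error_le hγ hR0 hVinf hVh hWinf hWh hk hn hj hR
  grw [hK] at hdec
  linarith [(abs_sub_le_iff.1 hdec).1, mul_le_mul_of_nonneg_left herr hC₀]

end Blocks

theorem stmt4_general {M : Type*} [MetricSpace M] [MeasurableSpace M] [BorelSpace M]
    (μ : Measure M) [IsProbabilityMeasure μ] (T : M → M)
    (η : ℝ) (hη0 : 0 < η) (γ : ℝ) (hγ : 1 < γ)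
    (hFCB : FunctionalCorrelationBound μ T η γ) :
    ∃ C : ℝ, 0 < C ∧
      ∀ (k n : ℕ), 1 ≤ k → 2 * k ≤ n →
      ∀ (v w : M → ℝ) (Vinf Vh Winf Wh : ℝ),
        0 ≤ Vinf → 0 ≤ Vh → 0 ≤ Winf → 0 ≤ Wh →
        (∀ x, |v x| ≤ Vinf) → (∀ x y, |v x - v y| ≤ Vh * dist x y ^ η) →
        (∀ x, |w x| ≤ Winf) → (∀ x y, |w x - w y| ≤ Wh * dist x y ^ η) →
      ∀ (S : ℕ → M → ℝ),
        (∀ i, i < k → S i = fun x =>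
          ∑ j ∈ Finset.Ico (2 * i * n / (2 * k)) ((2 * i + 1) * n / (2 * k)),
            ∑ l ∈ Finset.Ico (2 * i * n / (2 * k)) j, v (T^[l] x) * w (T^[j] x)) →
      ∀ (X : ℕ → M → ℝ),
        (∀ i, i < k → X i = fun x => S i x - ∫ y, S i y ∂μ) →
      ∀ (Ω : Type) (_ : MeasurableSpace Ω) (P : Measure Ω), IsProbabilityMeasure P →
      ∀ (Xhat : ℕ → Ω → ℝ),
        ProbabilityTheory.iIndepFun
          (fun i : Fin k => Xhat i) P →
        (∀ i, i < k → ProbabilityTheory.IdentDistrib (Xhat i) (X i) P μ) →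
        (∫ x, |∑ i ∈ Finset.range k, X i x| ^ γ ∂μ)
          ≤ C * (k : ℝ) * (n : ℝ) ^ γ * (Vinf + Vh) ^ γ * (Winf + Wh) ^ γ +
            ∫ ω, |∑ i ∈ Finset.range k, Xhat i ω| ^ γ ∂P := by
  obtain ⟨C₀, hC₀, hF⟩ := hFCB.exists_trajectoryCorrelationBound
  refine ⟨C₀ * 2 ^ γ * (1 + γ), by positivity, ?_⟩
  intro k n hk hn v w Vinf Vh Winf Wh hVinf hVh hWinf hWh hv hvh hw hwh S hS X hX Ω _ P _ Xhat
    hind hident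
  set B : ℝ := 2 * ((n / (2 * k) + 1 : ℕ) ^ 2 * (Vinf * Winf))
  have hSB : ∀ i < k, ∀ x, |S i x| ≤ ((n / (2 * k) + 1 : ℕ) : ℝ) ^ 2 * (Vinf * Winf) :=
    fun i hi x => by
      rw [hS i hi]
      refine (abs_iteratedSum_le hv hw _).trans ?_
      gcongr
      exact Nat.sub_le_iff_le_add'.2 (blockBoundary_succ_le (k := k) (n := n) (2 * i))
  have hXB : ∀ i < k, ∀ x, |X i x| ≤ B := fun i hi x => by
    rw [hX i hi]
    exact abs_sub_integral_le (hSB i hi) x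
  have hXS : ∀ i < k, ∀ x, X i x = iteratedSum v w (blockBoundary k n (2 * i))
      (blockBoundary k n (2 * i + 1)) (fun u => T^[u] x) - ∫ y, S i y ∂μ := fun i hi x => by
    rw [hX i hi, hS i hi]
    rfl
  have hR : (0 : ℝ) ≤ k * B := by positivity
  have hstep := fun j (hj : j < k) => integral_le_integral_decoupled_add (μ := μ) hF hC₀.le hγ.le
    hη0 hVinf hVh hWinf hWh hv hvh hw hwh (by omega) hn hj hXS hR le_rfl
    (lipschitzWith_shiftedExpectation (lipschitzWith_truncPow hR hγ.le)
      (abs_truncPow_le hR (by linarith)) fun i hi => (hident i (hi.trans hj)).aemeasurable_fst)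
    le_rfl (abs_shiftedExpectation_le (abs_truncPow_le hR (by linarith)) j)
  linarith [integral_abs_sum_rpow_le_of_decoupling hγ.le (by positivity) hind hident hXB hstep]

/-- **Lemma 5.7.** Suppose `T` satisfies the Functional Correlation Bound with rate `n^{-γ}`,
`γ > 1`. Then there is `C > 0` such that for all `k ≥ 1`, `n ≥ 2k`, all bounded `η`-Hölder
`v, w`, with `a_i = ⌊in/(2k)⌋`, `X_i = 𝕊_{v,w}(a_{2i}, a_{2i+1}) - E_μ[𝕊_{v,w}(a_{2i}, a_{2i+1})]`
and independent `X̂_i` with `X̂_i =_d X_i`: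
`E_μ[|∑ X_i|^γ] ≤ C k n^γ ‖v‖_η^γ ‖w‖_η^γ + E[|∑ X̂_i|^γ]`. -/
theorem stmt4 {M : Type*} [MetricSpace M] [MeasurableSpace M] [BorelSpace M]
    (μ : Measure M) [IsProbabilityMeasure μ] (T : M → M) (hT : MeasurePreserving T μ μ)
    (η : ℝ) (hη0 : 0 < η) (hη1 : η ≤ 1) (γ : ℝ) (hγ : 1 < γ)
    (hFCB : FunctionalCorrelationBound μ T η γ) :
    ∃ C : ℝ, 0 < C ∧
      ∀ (k n : ℕ), 1 ≤ k → 2 * k ≤ n →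
      ∀ (v w : M → ℝ) (Vinf Vh Winf Wh : ℝ),
        0 ≤ Vinf → 0 ≤ Vh → 0 ≤ Winf → 0 ≤ Wh →
        (∀ x, |v x| ≤ Vinf) → (∀ x y, |v x - v y| ≤ Vh * dist x y ^ η) →
        (∀ x, |w x| ≤ Winf) → (∀ x y, |w x - w y| ≤ Wh * dist x y ^ η) →
      ∀ (S : ℕ → M → ℝ),
        (∀ i, i < k → S i = fun x =>
          ∑ j ∈ Finset.Ico (2 * i * n / (2 * k)) ((2 * i + 1) * n / (2 * k)),
            ∑ l ∈ Finset.Ico (2 * i * n / (2 * k)) j, v (T^[l] x) * w (T^[j] x)) →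
      ∀ (X : ℕ → M → ℝ),
        (∀ i, i < k → X i = fun x => S i x - ∫ y, S i y ∂μ) →
      ∀ (Ω : Type) (_ : MeasurableSpace Ω) (P : Measure Ω), IsProbabilityMeasure P →
      ∀ (Xhat : ℕ → Ω → ℝ),
        ProbabilityTheory.iIndepFun
          (fun i : Fin k => Xhat i) P →
        (∀ i, i < k → ProbabilityTheory.IdentDistrib (Xhat i) (X i) P μ) →
        (∫ x, |∑ i ∈ Finset.range k, X i x| ^ γ ∂μ)
          ≤ C * (k : ℝ) * (n : ℝ) ^ γ * (Vinf + Vh) ^ γ * (Winf + Wh) ^ γ +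
            ∫ ω, |∑ i ∈ Finset.range k, Xhat i ω| ^ γ ∂P :=
  stmt4_general μ T η hη0 γ hγ hFCB
end

section
/- Fix p with 1 ≤ p ≤ 2. There exists a constant C > 0, depending only on p, such that for every integer k ≥ 1 and all independent, mean zero, real-valued random variables X̂_0,…,X̂_{k−1} on a probability space, each with E[|X̂_i|^p] < ∞, one has E[|Σ_{i=0}^{k−1} X̂_i|^p] ≤ C Σ_{i=0}^{k−1} E[|X̂_i|^p]. -/
/-!
For `1 ≤ p ≤ 2` the derivative `f' x = p * sign x * |x| ^ (p - 1)` of `f x = |x| ^ p` is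
`(p - 1)`-Hölder, which gives the one-step Taylor bound
`|a + b| ^ p ≤ |a| ^ p + f' a * b + 6 * |b| ^ p`.
Apply it with `a` the partial sum `S` and `b` the next summand `X`: by independence and `E X = 0`
the linear term has expectation `E (f' S) * E X = 0`, so
`E |S + X| ^ p ≤ E |S| ^ p + 6 * E |X| ^ p`, and induction on the number of summands gives
the inequality with `C = 6`.
-/

open MeasureTheory ProbabilityTheory

lemma Real.abs_rpow_sub_rpow_le {q x y : ℝ} (hq0 : 0 ≤ q) (hq1 : q ≤ 1) (hx : 0 ≤ x)
    (hy : 0 ≤ y) : |x ^ q - y ^ q| ≤ |x - y| ^ q := by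
  wlog hyx : y ≤ x generalizing x y
  · rw [abs_sub_comm, abs_sub_comm x]
    exact this hy hx (le_of_not_ge hyx)
  have hsub : x ^ q ≤ y ^ q + (x - y) ^ q := by
    simpa using Real.rpow_add_le_add_rpow hy (sub_nonneg.2 hyx) hq0 hq1
  have hmono : y ^ q ≤ x ^ q := Real.rpow_le_rpow hy hyx hq0
  rw [abs_of_nonneg (sub_nonneg.2 hmono), abs_of_nonneg (sub_nonneg.2 hyx)]
  linarith

lemma Real.abs_rpow_sub_one_mul_self {p : ℝ} (x : ℝ) (hp : p ≠ 0) :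
    |x| ^ (p - 1) * |x| = |x| ^ p := by
  rcases eq_or_ne x 0 with rfl | hx
  · simp [Real.zero_rpow hp]
  · rw [← Real.rpow_add_one (abs_pos.2 hx).ne', sub_add_cancel]

lemma rpow_add_sub_rpow_sub_mul_le {p a b : ℝ} (hp1 : 1 ≤ p) (hp2 : p ≤ 2) (ha : 0 < a)
    (hab : 0 < a + b) :
    (a + b) ^ p - a ^ p - p * a ^ (p - 1) * b ≤ p * |b| ^ p := by
  have hpos : ∀ t ∈ Set.Icc (0 : ℝ) 1, 0 < a + t * b := fun t ht => by
    nlinarith [mul_nonneg ht.1 hab.le, mul_nonneg (sub_nonneg.2 ht.2) ha.le]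
  obtain ⟨ξ, hξ, hslope⟩ := exists_hasDerivAt_eq_slope (fun t => (a + t * b) ^ p)
    (fun t => p * (a + t * b) ^ (p - 1) * b) zero_lt_one
    (ContinuousOn.rpow_const (by fun_prop) fun t ht => Or.inl (hpos t ht).ne')
    (fun t ht => by
      have hlin : HasDerivAt (fun t => a + t * b) b t := by
        simpa using ((hasDerivAt_id t).mul_const b).const_add a
      convert hlin.rpow_const (p := p) (Or.inl (hpos t (Set.mem_Icc_of_Ioo ht)).ne') using 1
      ring)
  have hmvt : (a + b) ^ p - a ^ p = p * (a + ξ * b) ^ (p - 1) * b := by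
    simpa using hslope.symm
  have hstep : |a + ξ * b - a| ≤ |b| := by
    rw [add_sub_cancel_left, abs_mul, abs_of_pos hξ.1]
    exact mul_le_of_le_one_left (abs_nonneg b) hξ.2.le
  have hholder : |(a + ξ * b) ^ (p - 1) - a ^ (p - 1)| ≤ |b| ^ (p - 1) := calc
    _ ≤ |a + ξ * b - a| ^ (p - 1) := Real.abs_rpow_sub_rpow_le (by linarith) (by linarith)
          (hpos ξ (Set.mem_Icc_of_Ioo hξ)).le ha.le
    _ ≤ |b| ^ (p - 1) := by gcongr
  calc (a + b) ^ p - a ^ p - p * a ^ (p - 1) * b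
      = p * (b * ((a + ξ * b) ^ (p - 1) - a ^ (p - 1))) := by rw [hmvt]; ring
    _ ≤ p * (|b| * |b| ^ (p - 1)) := by
          refine mul_le_mul_of_nonneg_left ?_ (by linarith)
          calc _ ≤ |b * ((a + ξ * b) ^ (p - 1) - a ^ (p - 1))| := le_abs_self _
            _ ≤ |b| * |b| ^ (p - 1) := by rw [abs_mul]; gcongr
    _ = p * |b| ^ p := by rw [mul_comm |b|, Real.abs_rpow_sub_one_mul_self b (by linarith)]

lemma Real.abs_sign_le_one (x : ℝ) : |Real.sign x| ≤ 1 := by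
  rcases Real.sign_apply_eq x with h | h | h <;> simp [h]

lemma abs_add_rpow_le {p : ℝ} (hp1 : 1 ≤ p) (hp2 : p ≤ 2) (a b : ℝ) :
    |a + b| ^ p ≤ |a| ^ p + p * Real.sign a * |a| ^ (p - 1) * b + 6 * |b| ^ p := by
  by_cases hab : |a| ≤ |b|
  · have hsum : |a + b| ^ p ≤ 4 * |b| ^ p := calc
      |a + b| ^ p ≤ (2 * |b|) ^ p := by
          gcongr
          linarith [abs_add_le a b]
      _ = 2 ^ p * |b| ^ p := Real.mul_rpow zero_le_two (abs_nonneg b)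
      _ ≤ 2 ^ (2 : ℝ) * |b| ^ p := by gcongr; exact one_le_two
      _ = 4 * |b| ^ p := by norm_num
    have hlin : |p * Real.sign a * |a| ^ (p - 1) * b| ≤ 2 * |b| ^ p := calc
      _ = p * |Real.sign a| * |a| ^ (p - 1) * |b| := by
          rw [abs_mul, abs_mul, abs_mul, abs_of_nonneg (by linarith : 0 ≤ p),
            abs_of_nonneg (by positivity : 0 ≤ |a| ^ (p - 1))]
      _ ≤ 2 * 1 * |b| ^ (p - 1) * |b| := by
          gcongr
          exact Real.abs_sign_le_one a
      _ = 2 * |b| ^ p := by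
          rw [mul_one, mul_assoc, Real.abs_rpow_sub_one_mul_self b (by linarith)]
    linarith [neg_abs_le (p * Real.sign a * |a| ^ (p - 1) * b), Real.rpow_nonneg (abs_nonneg a) p]
  push Not at hab
  wlog ha : 0 < a generalizing a b
  · have hneg : a < 0 := lt_of_le_of_ne (not_lt.1 ha) (by rintro rfl; exact absurd hab (by simp))
    have := this (-a) (-b) (by simpa using hab) (by linarith)
    rw [← neg_add, abs_neg, abs_neg, abs_neg, Real.sign_neg] at this
    linarith
  have hab' : 0 < a + b := by linarith [neg_abs_le b, abs_of_pos ha]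
  have hrem := rpow_add_sub_rpow_sub_mul_le (b := b) hp1 hp2 ha hab'
  rw [abs_of_pos ha, Real.sign_of_pos ha, abs_of_pos hab']
  nlinarith [Real.rpow_nonneg (abs_nonneg b) p]

@[fun_prop]
lemma Real.measurable_sign : Measurable Real.sign :=
  Measurable.ite (measurableSet_lt measurable_id measurable_const) measurable_const <|
    Measurable.ite (measurableSet_lt measurable_const measurable_id) measurable_const
      measurable_const

lemma MeasureTheory.MemLp.integrable_abs_rpow {Ω : Type*} [MeasurableSpace Ω] {P : Measure Ω}
    [IsFiniteMeasure P] {f : Ω → ℝ} {p q : ℝ} (hf : MemLp f (ENNReal.ofReal p) P) (hq : 0 ≤ q)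
    (hqp : q ≤ p) : Integrable (fun ω => |f ω| ^ q) P := by
  simpa [ENNReal.toReal_ofReal hq] using
    (hf.mono_exponent (ENNReal.ofReal_le_ofReal hqp)).integrable_norm_rpow'

lemma integral_abs_add_rpow_le {Ω : Type*} [MeasurableSpace Ω] {P : Measure Ω}
    [IsFiniteMeasure P] {p : ℝ} (hp1 : 1 ≤ p) (hp2 : p ≤ 2) {S X : Ω → ℝ}
    (hind : IndepFun S X P) (hS : MemLp S (ENNReal.ofReal p) P)
    (hX : MemLp X (ENNReal.ofReal p) P) (hX0 : ∫ ω, X ω ∂P = 0) :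
    ∫ ω, |S ω + X ω| ^ p ∂P ≤ ∫ ω, |S ω| ^ p ∂P + 6 * ∫ ω, |X ω| ^ p ∂P := by
  set g : ℝ → ℝ := fun x => p * Real.sign x * |x| ^ (p - 1)
  have hg : Measurable g := by fun_prop
  have hgS : Integrable (fun ω => g (S ω)) P := by
    refine Integrable.mono'
      ((hS.integrable_abs_rpow (q := p - 1) (by linarith) (by linarith)).const_mul p)
      (hg.comp_aemeasurable hS.aestronglyMeasurable.aemeasurable).aestronglyMeasurable
      (ae_of_all _ fun ω => ?_)
    rw [Real.norm_eq_abs, abs_mul, abs_mul, abs_of_nonneg (by linarith : 0 ≤ p),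
      abs_of_nonneg (by positivity : 0 ≤ |S ω| ^ (p - 1))]
    simpa using mul_le_mul_of_nonneg_right
      (mul_le_mul_of_nonneg_left (Real.abs_sign_le_one (S ω)) (by linarith : 0 ≤ p))
      (by positivity : 0 ≤ |S ω| ^ (p - 1))
  have hX1 : Integrable X P := memLp_one_iff_integrable.1 <|
    hX.mono_exponent (by simpa using ENNReal.ofReal_le_ofReal hp1)
  have hindg : IndepFun (fun ω => g (S ω)) X P := hind.comp hg measurable_id
  have hlin : ∫ ω, g (S ω) * X ω ∂P = 0 := by
    rw [hindg.integral_fun_mul_eq_mul_integral hgS.aestronglyMeasurable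
      hX1.aestronglyMeasurable, hX0, mul_zero]
  have hSp := hS.integrable_abs_rpow (by linarith) le_rfl
  have hXp := hX.integrable_abs_rpow (by linarith) le_rfl
  have hgSX : Integrable (fun ω => g (S ω) * X ω) P := hindg.integrable_mul hgS hX1
  calc ∫ ω, |S ω + X ω| ^ p ∂P
      ≤ ∫ ω, (|S ω| ^ p + g (S ω) * X ω + 6 * |X ω| ^ p) ∂P :=
        integral_mono ((hS.add hX).integrable_abs_rpow (by linarith) le_rfl)
          ((hSp.add hgSX).add (hXp.const_mul 6)) fun ω => abs_add_rpow_le hp1 hp2 (S ω) (X ω)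
    _ = ∫ ω, |S ω| ^ p ∂P + 6 * ∫ ω, |X ω| ^ p ∂P := by
        rw [integral_add (f := fun ω => |S ω| ^ p + g (S ω) * X ω) (hSp.add hgSX)
          (hXp.const_mul 6), integral_add hSp hgSX, integral_const_mul, hlin, add_zero]

lemma integral_abs_finsetSum_rpow_le {Ω ι : Type*} [MeasurableSpace Ω] {P : Measure Ω}
    [IsFiniteMeasure P] {p : ℝ} (hp1 : 1 ≤ p) (hp2 : p ≤ 2) {X : ι → Ω → ℝ}
    (hind : iIndepFun X P) (hmeas : ∀ i, Measurable (X i)) (hmean : ∀ i, ∫ ω, X i ω ∂P = 0)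
    (hmem : ∀ i, MemLp (X i) (ENNReal.ofReal p) P) (s : Finset ι) :
    ∫ ω, |∑ i ∈ s, X i ω| ^ p ∂P ≤ 6 * ∑ i ∈ s, ∫ ω, |X i ω| ^ p ∂P := by
  classical
  induction s using Finset.induction_on with
  | empty => simp [Real.zero_rpow (by linarith : p ≠ 0)]
  | insert i s hi ih =>
    have hstep := integral_abs_add_rpow_le hp1 hp2 (hind.indepFun_finsetSum_of_notMem hmeas hi)
      (memLp_finsetSum' s fun j _ => hmem j) (hmem i) (hmean i)
    simp only [Finset.sum_apply] at hstep
    simp only [Finset.sum_insert hi, add_comm (X i _)]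
    linarith

/-- **von Bahr–Esseen inequality.** For `1 ≤ p ≤ 2` there is `C > 0`, depending only on `p`,
such that for all `k ≥ 1` and all independent, mean zero, real random variables
`X̂_0, …, X̂_{k-1}` with `E[|X̂_i|^p] < ∞`:
`E[|∑ X̂_i|^p] ≤ C ∑ E[|X̂_i|^p]`. -/
theorem stmt5 (p : ℝ) (hp1 : 1 ≤ p) (hp2 : p ≤ 2) :
    ∃ C : ℝ, 0 < C ∧
      ∀ (Ω : Type) (_ : MeasurableSpace Ω) (P : Measure Ω), IsProbabilityMeasure P →
      ∀ (k : ℕ), 1 ≤ k →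
      ∀ (X : ℕ → Ω → ℝ),
        iIndepFun (fun i : Fin k => X i) P →
        (∀ i, i < k → Measurable (X i)) →
        (∀ i, i < k → ∫ ω, X i ω ∂P = 0) →
        (∀ i, i < k → MemLp (X i) (ENNReal.ofReal p) P) →
        (∫ ω, |∑ i ∈ Finset.range k, X i ω| ^ p ∂P)
          ≤ C * ∑ i ∈ Finset.range k, ∫ ω, |X i ω| ^ p ∂P := by
  refine ⟨6, by norm_num, fun Ω _ P _ k _ X hind hmeas hmean hmem => ?_⟩
  have := integral_abs_finsetSum_rpow_le hp1 hp2 hind (fun i => hmeas i i.isLt)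
    (fun i => hmean i i.isLt) (fun i => hmem i i.isLt) Finset.univ
  have hrange :
      (fun ω => |∑ i : Fin k, X i ω| ^ p) = fun ω => |∑ i ∈ Finset.range k, X i ω| ^ p :=
    funext fun ω => by rw [Fin.sum_univ_eq_sum_range (X · ω)]
  rwa [hrange, Fin.sum_univ_eq_sum_range (fun i => ∫ ω, |X i ω| ^ p ∂P)] at this
end

section
/- Let β > 1. Then there exists a constant C > 0 such that for all integers n ≥ 1, Σ_{k=0}^{n} (k+1)^{−(β−1)} (n−k+1)^{−β} ≤ C n^{−(β−1)}. -/
/-- **Convolution estimate in the proof of Lemma 3.4.** For `β > 1` there is `C > 0` such that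
`∑_{k=0}^{n} (k+1)^{-(β-1)} (n-k+1)^{-β} ≤ C n^{-(β-1)}` for all `n ≥ 1`. -/
theorem stmt14 (β : ℝ) (hβ : 1 < β) :
    ∃ C : ℝ, 0 < C ∧ ∀ n : ℕ, 1 ≤ n →
      (∑ k ∈ Finset.range (n + 1),
          ((k : ℝ) + 1) ^ (-(β - 1)) * (((n - k : ℕ) : ℝ) + 1) ^ (-β))
        ≤ C * (n : ℝ) ^ (-(β - 1)) := by
  have hβ0 : 0 < β - 1 := by linarith
  have hS : Summable (fun b : ℕ => ((b : ℝ) + 1) ^ (-β)) := by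
    have h1 : Summable (fun b : ℕ => ((b : ℝ)) ^ (-β)) :=
      Real.summable_nat_rpow.mpr (by linarith)
    have h2 := (summable_nat_add_iff 1).mpr h1
    simpa using h2
  set S := ∑' b : ℕ, ((b : ℝ) + 1) ^ (-β) with hSdef
  have hSnn : 0 ≤ S := tsum_nonneg fun b => Real.rpow_nonneg (by positivity) _
  refine ⟨2 ^ (β - 1) * (S + 2), by positivity, fun n hn => ?_⟩
  have hn1 : (1 : ℝ) ≤ n := by exact_mod_cast hn
  set M : ℝ := ((n : ℝ) + 2) / 2 with hM
  have hMpos : 0 < M := by positivity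
  have key : ∀ k ∈ Finset.range (n + 1),
      ((k : ℝ) + 1) ^ (-(β - 1)) * (((n - k : ℕ) : ℝ) + 1) ^ (-β)
        ≤ M ^ (-(β - 1)) * ((((n - k : ℕ) : ℝ) + 1) ^ (-β) + 2 / ((n : ℝ) + 2)) := by
    intro k hk
    have hk' : k ≤ n := Nat.lt_succ_iff.mp (Finset.mem_range.mp hk)
    have hcast : ((n - k : ℕ) : ℝ) = (n : ℝ) - k := by
      push_cast [hk']; ring
    have hknn : (0:ℝ) < (k:ℝ) + 1 := by positivity
    have hnknn : (0:ℝ) < ((n - k : ℕ):ℝ) + 1 := by positivity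
    rcases le_or_gt M ((k : ℝ) + 1) with h | h
    · have h1 : ((k : ℝ) + 1) ^ (-(β - 1)) ≤ M ^ (-(β - 1)) :=
        Real.rpow_le_rpow_of_nonpos hMpos h (by linarith)
      have h2 : (0:ℝ) ≤ (((n - k : ℕ) : ℝ) + 1) ^ (-β) := Real.rpow_nonneg hnknn.le _
      have h4 : (0:ℝ) ≤ 2 / ((n:ℝ)+2) := by positivity
      have h5 : (0:ℝ) ≤ M ^ (-(β - 1)) := Real.rpow_nonneg hMpos.le _
      nlinarith [mul_le_mul_of_nonneg_right h1 h2]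
    · have hMle : M ≤ ((n - k : ℕ) : ℝ) + 1 := by
        rw [hcast]
        have h6 : (n:ℝ) + 2 = M + M := by rw [hM]; ring
        linarith
      have h1 : (((n - k : ℕ) : ℝ) + 1) ^ (-β) ≤ M ^ (-β) :=
        Real.rpow_le_rpow_of_nonpos hMpos hMle (by linarith)
      have h2 : ((k : ℝ) + 1) ^ (-(β - 1)) ≤ 1 :=
        Real.rpow_le_one_of_one_le_of_nonpos (by linarith) (by linarith)
      have h3 : M ^ (-β) = M ^ (-(β-1)) * (2 / ((n:ℝ)+2)) := by
        have h7 : (2 : ℝ) / ((n:ℝ)+2) = M ^ (-(1:ℝ)) := by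
          rw [Real.rpow_neg_one, hM]
          field_simp
        rw [h7, ← Real.rpow_add hMpos]
        ring_nf
      calc ((k : ℝ) + 1) ^ (-(β - 1)) * (((n - k : ℕ) : ℝ) + 1) ^ (-β)
          ≤ 1 * (M ^ (-β)) := mul_le_mul h2 h1 (Real.rpow_nonneg hnknn.le _) zero_le_one
        _ = M ^ (-(β-1)) * (2 / ((n:ℝ)+2)) := by rw [one_mul, h3]
        _ ≤ M ^ (-(β - 1)) * ((((n - k : ℕ) : ℝ) + 1) ^ (-β) + 2 / ((n : ℝ) + 2)) := by
            refine mul_le_mul_of_nonneg_left ?_ (Real.rpow_nonneg hMpos.le _)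
            have h8 := Real.rpow_nonneg hnknn.le (-β)
            linarith
  have hsum_reflect : (∑ k ∈ Finset.range (n + 1), (((n - k : ℕ) : ℝ) + 1) ^ (-β))
      = ∑ b ∈ Finset.range (n+1), ((b:ℝ)+1)^(-β) := by
    rw [← Finset.sum_range_reflect (fun b => ((b:ℝ)+1)^(-β)) (n+1)]
    refine Finset.sum_congr rfl fun k hk => ?_
    congr 2
  have hsum_le : (∑ k ∈ Finset.range (n + 1), (((n - k : ℕ) : ℝ) + 1) ^ (-β)) ≤ S := by
    rw [hsum_reflect]
    exact Summable.sum_le_tsum _ (fun b _ => Real.rpow_nonneg (by positivity) _) hS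
  have hMz : M ^ (-(β - 1)) ≤ 2 ^ (β - 1) * (n : ℝ) ^ (-(β - 1)) := by
    have h1 : ((n:ℝ)/2) ≤ M := by rw [hM]; linarith
    have h2 : (0:ℝ) < (n:ℝ)/2 := by positivity
    have h3 : M ^ (-(β - 1)) ≤ ((n:ℝ)/2) ^ (-(β - 1)) :=
      Real.rpow_le_rpow_of_nonpos h2 h1 (by linarith)
    have h4 : ((n:ℝ)/2) ^ (-(β - 1)) = 2 ^ (β - 1) * (n : ℝ) ^ (-(β - 1)) := by
      rw [Real.div_rpow (by positivity) (by norm_num), Real.rpow_neg (by positivity),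
        Real.rpow_neg (by norm_num : (0:ℝ) ≤ 2)]
      field_simp
    linarith [h4 ▸ h3]
  calc (∑ k ∈ Finset.range (n + 1), ((k : ℝ) + 1) ^ (-(β - 1)) * (((n - k : ℕ) : ℝ) + 1) ^ (-β))
      ≤ ∑ k ∈ Finset.range (n + 1),
          M ^ (-(β - 1)) * ((((n - k : ℕ) : ℝ) + 1) ^ (-β) + 2 / ((n : ℝ) + 2)) :=
        Finset.sum_le_sum key
    _ = M ^ (-(β - 1)) * ((∑ k ∈ Finset.range (n + 1), (((n - k : ℕ) : ℝ) + 1) ^ (-β))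
          + ((n:ℝ)+1) * (2 / ((n : ℝ) + 2))) := by
        rw [← Finset.mul_sum, Finset.sum_add_distrib, Finset.sum_const, Finset.card_range]
        ring
    _ ≤ M ^ (-(β - 1)) * (S + 2) := by
        refine mul_le_mul_of_nonneg_left ?_ (Real.rpow_nonneg hMpos.le _)
        have h9 : ((n:ℝ)+1) * (2 / ((n : ℝ) + 2)) ≤ 2 := by
          rw [← mul_div_assoc, div_le_iff₀ (by positivity : (0:ℝ) < (n:ℝ)+2)]
          nlinarith
        linarith
    _ ≤ 2 ^ (β - 1) * (S + 2) * (n : ℝ) ^ (-(β - 1)) := by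
        have hS2 : (0:ℝ) ≤ S + 2 := by linarith
        nlinarith [mul_le_mul_of_nonneg_right hMz hS2]
end
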